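/- arXiv:2605.09459 — 6 statements merged into one kernel-verified Lean document; each statement's English description precedes it below -/
import Mathlib

section
/- Let d ≥ 2 and a ≥ b > 0 with a < d and a + b > d. If f, g : ℤ^d → ℝ satisfy |f(x)| ≤ C₁‖x‖^{-a} and |g(x)| ≤ C₂‖x‖^{-b} for all nonzero x (and are bounded at 0), then there is a constant C = C(a,b,d,C₁,C₂) such that for all x ∈ ℤ^d, |∑_{y∈ℤ^d} f(y) g(x−y)| ≤ C ‖x‖^{d−(a+b)} for x ≠ 0. -/
/-!
With `⟨x⟩ = max 1 ‖x‖` (equal to `‖x‖` off the origin) the hypotheses read `|f| ≤ C₁ ⟨·⟩ ^ (-a)`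
and `|g| ≤ C₂ ⟨·⟩ ^ (-b)` everywhere. Put `r = ⟨x⟩ / 2`; since `⟨x⟩ ≤ ⟨y⟩ + ⟨x - y⟩`, if
`⟨y⟩ ≤ r` then `⟨x - y⟩ ≥ r` and the factor at `x - y` is at most `r ^ (-b)`, and symmetrically;
if both exceed `r`, the product is at most `min ⟨y⟩ ⟨x - y⟩ ^ (-(a + b))`. The convolution is
thus dominated by ball sums `∑_{⟨y⟩ ≤ r} ⟨y⟩ ^ (-s) ≲ r ^ (d - s)` for `s = a, b < d` and tail
sums `∑_{⟨y⟩ > r} ⟨y⟩ ^ (-(a + b)) ≲ r ^ (d - (a + b))`, all of size `r ^ (d - (a + b))`. Both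
kinds of sums are estimated by cutting into dyadic shells `A ≤ ⟨y⟩ < 2A`, each with `O(A ^ d)`
lattice points, and summing a geometric series.
-/

/-- Euclidean norm of a point of `ℤ^d`. -/
noncomputable def znorm {d : ℕ} (x : Fin d → ℤ) : ℝ :=
  Real.sqrt (∑ i, ((x i : ℝ)) ^ 2)

open Finset

lemma rpow_neg_mul_rpow_neg_le {p q a b : ℝ} (hp : 0 < p) (hq : 0 < q) (ha : 0 ≤ a)
    (hb : 0 ≤ b) : p ^ (-a) * q ^ (-b) ≤ p ^ (-(a + b)) + q ^ (-(a + b)) := by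
  rcases le_total p q with hpq | hqp
  · calc p ^ (-a) * q ^ (-b) ≤ p ^ (-a) * p ^ (-b) :=
          mul_le_mul_of_nonneg_left (Real.rpow_le_rpow_of_nonpos hp hpq (by linarith))
            (by positivity)
      _ = p ^ (-(a + b)) := by rw [← Real.rpow_add hp, neg_add]
      _ ≤ p ^ (-(a + b)) + q ^ (-(a + b)) := le_add_of_nonneg_right (by positivity)
  · calc p ^ (-a) * q ^ (-b) ≤ q ^ (-a) * q ^ (-b) :=
          mul_le_mul_of_nonneg_right (Real.rpow_le_rpow_of_nonpos hq hqp (by linarith))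
            (by positivity)
      _ = q ^ (-(a + b)) := by rw [← Real.rpow_add hq, neg_add]
      _ ≤ p ^ (-(a + b)) + q ^ (-(a + b)) := le_add_of_nonneg_left (by positivity)

lemma sum_sub_le_of_forall_sum_le {G : Type*} [AddCommGroup G] {F : G → ℝ} {B : ℝ}
    (h : ∀ u : Finset G, ∑ z ∈ u, F z ≤ B) (x : G) (u : Finset G) :
    ∑ y ∈ u, F (x - y) ≤ B := by
  classical
  rw [← sum_image fun _ _ _ _ h => sub_right_injective h]
  exact h _

lemma abs_tsum_le_of_forall_sum_abs_le {ι : Type*} {F : ι → ℝ} {B : ℝ}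
    (h : ∀ u : Finset ι, ∑ i ∈ u, |F i| ≤ B) : |∑' i, F i| ≤ B := by
  simp only [← Real.norm_eq_abs] at h ⊢
  have hF : Summable fun i => ‖F i‖ := summable_of_sum_le (fun i => norm_nonneg _) h
  exact (norm_tsum_le_tsum_norm hF).trans (hF.tsum_le_of_sum_le h)

section Lattice

variable {d : ℕ}

lemma znorm_eq_norm (x : Fin d → ℤ) :
    znorm x = ‖(WithLp.toLp 2 (fun i => (x i : ℝ)) : EuclideanSpace ℝ (Fin d))‖ := by
  simp [znorm, EuclideanSpace.norm_eq, Real.norm_eq_abs, sq_abs]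

lemma znorm_le_add_znorm_sub (x y : Fin d → ℤ) : znorm x ≤ znorm y + znorm (x - y) := by
  simp only [znorm_eq_norm, Pi.sub_apply, Int.cast_sub]
  exact norm_le_norm_add_norm_sub' _ _

lemma abs_apply_le_znorm (x : Fin d → ℤ) (i : Fin d) : |(x i : ℝ)| ≤ znorm x := by
  simpa [znorm_eq_norm, Real.norm_eq_abs] using
    PiLp.norm_apply_le (WithLp.toLp 2 (fun i => (x i : ℝ)) : EuclideanSpace ℝ (Fin d)) i

lemma one_le_znorm {x : Fin d → ℤ} (hx : x ≠ 0) : 1 ≤ znorm x := by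
  obtain ⟨i, hi⟩ := Function.ne_iff.1 hx
  calc (1 : ℝ) ≤ |(x i : ℝ)| := by exact_mod_cast Int.one_le_abs hi
    _ ≤ znorm x := abs_apply_le_znorm x i

lemma card_le_of_forall_znorm_le {B : ℝ} (hB : 0 ≤ B) {u : Finset (Fin d → ℤ)}
    (hu : ∀ y ∈ u, znorm y ≤ B) : (#u : ℝ) ≤ (2 * B + 1) ^ d := by
  classical
  set m := ⌊B⌋
  have hm : 0 ≤ m := Int.floor_nonneg.2 hB
  have hsub : u ⊆ Fintype.piFinset fun _ => Icc (-m) m := by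
    intro y hy
    refine Fintype.mem_piFinset.2 fun i => mem_Icc.2 ?_
    have hyi := abs_le.1 ((abs_apply_le_znorm y i).trans (hu y hy))
    have h₁ : -y i ≤ m := Int.le_floor.2 (by push_cast; linarith)
    have h₂ : y i ≤ m := Int.le_floor.2 hyi.2
    omega
  have hcard : #u ≤ (2 * m.toNat + 1) ^ d := by
    have := card_le_card hsub
    rwa [Fintype.card_piFinset, prod_const, Int.card_Icc, card_univ, Fintype.card_fin,
      show (m + 1 - -m).toNat = 2 * m.toNat + 1 by omega] at this
  calc (#u : ℝ) ≤ ((2 * m.toNat + 1) ^ d : ℕ) := by exact_mod_cast hcard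
    _ ≤ (2 * B + 1) ^ d := by
      push_cast
      have : (m.toNat : ℝ) ≤ B := by
        rw [show (m.toNat : ℝ) = (m : ℝ) by exact_mod_cast Int.toNat_of_nonneg hm]
        exact Int.floor_le B
      gcongr

noncomputable def regNorm (x : Fin d → ℤ) : ℝ := max 1 (znorm x)

lemma one_le_regNorm (x : Fin d → ℤ) : 1 ≤ regNorm x := le_max_left _ _

lemma regNorm_pos (x : Fin d → ℤ) : 0 < regNorm x := one_pos.trans_le (one_le_regNorm x)

lemma znorm_le_regNorm (x : Fin d → ℤ) : znorm x ≤ regNorm x := le_max_right _ _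

lemma regNorm_zero : regNorm (0 : Fin d → ℤ) = 1 := by simp [regNorm, znorm]

lemma regNorm_of_ne_zero {x : Fin d → ℤ} (hx : x ≠ 0) : regNorm x = znorm x :=
  max_eq_right (one_le_znorm hx)

lemma regNorm_le_add_regNorm_sub (x y : Fin d → ℤ) : regNorm x ≤ regNorm y + regNorm (x - y) :=
  max_le (by linarith [one_le_regNorm y, one_le_regNorm (x - y)])
    ((znorm_le_add_znorm_sub x y).trans (add_le_add (znorm_le_regNorm y) (znorm_le_regNorm _)))

lemma regNorm_rpow_nonneg (x : Fin d → ℤ) (s : ℝ) : 0 ≤ regNorm x ^ s :=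
  Real.rpow_nonneg (regNorm_pos x).le s

lemma abs_le_mul_regNorm_rpow {f : (Fin d → ℤ) → ℝ} {C a : ℝ}
    (hf : ∀ x, x ≠ 0 → |f x| ≤ C * znorm x ^ (-a)) (hf0 : |f 0| ≤ C) (x : Fin d → ℤ) :
    |f x| ≤ C * regNorm x ^ (-a) := by
  rcases eq_or_ne x 0 with rfl | hx
  · simpa [regNorm_zero] using hf0
  · simpa [regNorm_of_ne_zero hx] using hf x hx

lemma sum_regNorm_rpow_le_of_shell {s A : ℝ} (hs : 0 ≤ s) (hA : 0 < A) {u : Finset (Fin d → ℤ)}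
    (hu : ∀ y ∈ u, A ≤ regNorm y ∧ regNorm y < 2 * A) :
    ∑ y ∈ u, regNorm y ^ (-s) ≤ 6 ^ d * A ^ ((d : ℝ) - s) := by
  rcases u.eq_empty_or_nonempty with rfl | ⟨y₀, hy₀⟩
  · simp only [sum_empty]; positivity
  -- a nonempty shell forces `1 ≤ 2A`, which is what makes `4A + 1 ≤ 6A`
  have hA₀ : 1 ≤ 2 * A := (one_le_regNorm y₀).trans (hu y₀ hy₀).2.le
  calc ∑ y ∈ u, regNorm y ^ (-s) ≤ ∑ _y ∈ u, A ^ (-s) :=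
        sum_le_sum fun y hy => Real.rpow_le_rpow_of_nonpos hA (hu y hy).1 (by linarith)
    _ = #u * A ^ (-s) := by rw [sum_const, nsmul_eq_mul]
    _ ≤ (6 * A) ^ d * A ^ (-s) := by
        gcongr
        refine (card_le_of_forall_znorm_le (by linarith) fun y hy =>
          (znorm_le_regNorm y).trans (hu y hy).2.le).trans ?_
        gcongr
        linarith
    _ = 6 ^ d * A ^ ((d : ℝ) - s) := by
        rw [mul_pow, mul_assoc, ← Real.rpow_natCast A d, ← Real.rpow_add hA, sub_eq_add_neg]

lemma sum_regNorm_rpow_le_of_dyadic {s T : ℝ} (hs : 0 ≤ s) (hT : 0 < T) (N : ℕ)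
    {u : Finset (Fin d → ℤ)} (hu : ∀ y ∈ u, T ≤ regNorm y ∧ regNorm y < 2 ^ N * T) :
    ∑ y ∈ u, regNorm y ^ (-s) ≤ 6 ^ d * ∑ k ∈ range N, (2 ^ k * T) ^ ((d : ℝ) - s) := by
  induction N generalizing u with
  | zero =>
    rw [eq_empty_of_forall_notMem (s := u) fun y hy => by linarith [hu y hy]]
    simp
  | succ N ih =>
    rw [← sum_filter_add_sum_filter_not u (fun y => regNorm y < 2 ^ N * T), sum_range_succ,
      mul_add]
    refine add_le_add (ih fun y hy => ?_) (sum_regNorm_rpow_le_of_shell hs (by positivity)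
      fun y hy => ?_)
    · exact ⟨(hu y (mem_filter.1 hy).1).1, (mem_filter.1 hy).2⟩
    · obtain ⟨hyu, hyN⟩ := mem_filter.1 hy
      have hy₂ := (hu y hyu).2
      rw [pow_succ] at hy₂
      exact ⟨not_lt.1 hyN, by linarith⟩

lemma two_pow_mul_rpow {T : ℝ} (hT : 0 ≤ T) (k : ℕ) (t : ℝ) :
    (2 ^ k * T) ^ t = T ^ t * ((2 : ℝ) ^ t) ^ k := by
  rw [Real.mul_rpow (by positivity) hT, mul_comm, ← Real.rpow_natCast_mul zero_le_two,
    mul_comm (k : ℝ), Real.rpow_mul_natCast zero_le_two]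

lemma exists_sum_ball_le {s : ℝ} (hs : 0 ≤ s) (hsd : s < d) :
    ∃ K, ∀ r, 0 < r → ∀ u : Finset (Fin d → ℤ),
      ∑ y ∈ u with regNorm y ≤ r, regNorm y ^ (-s) ≤ K * r ^ ((d : ℝ) - s) := by
  set q : ℝ := 2 ^ ((d : ℝ) - s)
  have hq : 1 < q := Real.one_lt_rpow one_lt_two (by linarith)
  refine ⟨6 ^ d * q / (q - 1), fun r hr u => ?_⟩
  obtain ⟨N, hN⟩ := pow_unbounded_of_one_lt r one_lt_two
  -- start the dyadic shells at `r / 2 ^ N < 1 ≤ ⟨y⟩`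
  set T := r / 2 ^ N
  have hT : 0 < T := by positivity
  have hTN : 2 ^ (N + 1) * T = 2 * r := by simp only [T, pow_succ]; field_simp
  calc ∑ y ∈ u with regNorm y ≤ r, regNorm y ^ (-s)
      ≤ 6 ^ d * ∑ k ∈ range (N + 1), (2 ^ k * T) ^ ((d : ℝ) - s) := by
        refine sum_regNorm_rpow_le_of_dyadic hs hT (N + 1) fun y hy => ?_
        have hyr := (mem_filter.1 hy).2
        refine ⟨?_, by linarith⟩
        rw [div_le_iff₀ (by positivity)]
        nlinarith [one_le_regNorm y]
    _ = 6 ^ d * T ^ ((d : ℝ) - s) * ((q ^ (N + 1) - 1) / (q - 1)) := by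
        simp only [two_pow_mul_rpow hT.le, ← mul_sum, geom_sum_eq hq.ne', q]; ring
    _ ≤ 6 ^ d * T ^ ((d : ℝ) - s) * (q ^ (N + 1) / (q - 1)) := by
        gcongr
        linarith
    _ = 6 ^ d * q / (q - 1) * r ^ ((d : ℝ) - s) := by
        rw [mul_div_assoc', mul_assoc, ← two_pow_mul_rpow hT.le, hTN,
          Real.mul_rpow zero_le_two hr.le]
        ring

lemma exists_sum_tail_le {s : ℝ} (hsd : d < s) :
    ∃ K, ∀ r, 0 < r → ∀ u : Finset (Fin d → ℤ),
      ∑ y ∈ u with r < regNorm y, regNorm y ^ (-s) ≤ K * r ^ ((d : ℝ) - s) := by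
  set q : ℝ := 2 ^ ((d : ℝ) - s)
  have hq₀ : 0 ≤ q := by positivity
  have hq : q < 1 := Real.rpow_lt_one_of_one_lt_of_neg one_lt_two (by linarith)
  refine ⟨6 ^ d / (1 - q), fun r hr u => ?_⟩
  obtain ⟨N, hN⟩ := pow_unbounded_of_one_lt ((∑ y ∈ u, regNorm y) / r) one_lt_two
  calc ∑ y ∈ u with r < regNorm y, regNorm y ^ (-s)
      ≤ 6 ^ d * ∑ k ∈ range N, (2 ^ k * r) ^ ((d : ℝ) - s) := by
        refine sum_regNorm_rpow_le_of_dyadic (by linarith [(d.cast_nonneg : (0 : ℝ) ≤ d)]) hr N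
          fun y hy => ⟨(mem_filter.1 hy).2.le, ?_⟩
        rw [div_lt_iff₀ hr] at hN
        exact (single_le_sum (fun z _ => (regNorm_pos z).le) (mem_filter.1 hy).1).trans_lt hN
    _ = 6 ^ d * r ^ ((d : ℝ) - s) * ∑ k ∈ range N, q ^ k := by
        simp only [two_pow_mul_rpow hr.le, ← mul_sum, q]; ring
    _ ≤ 6 ^ d * r ^ ((d : ℝ) - s) * (1 / (1 - q)) := by
        gcongr
        simpa using geom_sum_Ico_le_of_lt_one (m := 0) (n := N) hq₀ hq
    _ = 6 ^ d / (1 - q) * r ^ ((d : ℝ) - s) := by ring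

lemma regNorm_rpow_mul_le {a b r : ℝ} (ha : 0 ≤ a) (hb : 0 ≤ b) {x : Fin d → ℤ}
    (hr : regNorm x = 2 * r) (y : Fin d → ℤ) :
    regNorm y ^ (-a) * regNorm (x - y) ^ (-b) ≤
      (if regNorm y ≤ r then regNorm y ^ (-a) else 0) * r ^ (-b)
      + r ^ (-a) * (if regNorm (x - y) ≤ r then regNorm (x - y) ^ (-b) else 0)
      + (if r < regNorm y then regNorm y ^ (-(a + b)) else 0)
      + (if r < regNorm (x - y) then regNorm (x - y) ^ (-(a + b)) else 0) := by
  have hr₀ : 0 < r := by linarith [one_le_regNorm x]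
  have htri := regNorm_le_add_regNorm_sub x y
  have hy₀ := regNorm_pos y
  have hxy₀ := regNorm_pos (x - y)
  have hA : 0 ≤ (if regNorm y ≤ r then regNorm y ^ (-a) else 0) * r ^ (-b) := by positivity
  have hB : 0 ≤ r ^ (-a) * (if regNorm (x - y) ≤ r then regNorm (x - y) ^ (-b) else 0) := by
    positivity
  have hC : 0 ≤ if r < regNorm y then regNorm y ^ (-(a + b)) else 0 := by positivity
  have hD : 0 ≤ if r < regNorm (x - y) then regNorm (x - y) ^ (-(a + b)) else 0 := by positivity
  by_cases hy : regNorm y ≤ r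
  · have : regNorm y ^ (-a) * regNorm (x - y) ^ (-b) ≤ regNorm y ^ (-a) * r ^ (-b) :=
      mul_le_mul_of_nonneg_left (Real.rpow_le_rpow_of_nonpos hr₀ (by linarith) (by linarith))
        (by positivity)
    rw [if_pos hy] at hA ⊢
    linarith
  by_cases hxy : regNorm (x - y) ≤ r
  · have : regNorm y ^ (-a) * regNorm (x - y) ^ (-b) ≤ r ^ (-a) * regNorm (x - y) ^ (-b) :=
      mul_le_mul_of_nonneg_right (Real.rpow_le_rpow_of_nonpos hr₀ (by linarith) (by linarith))
        (by positivity)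
    rw [if_pos hxy] at hB ⊢
    linarith
  rw [if_pos (not_le.1 hy), if_pos (not_le.1 hxy)]
  linarith [rpow_neg_mul_rpow_neg_le hy₀ hxy₀ ha hb]

theorem exists_sum_regNorm_rpow_mul_le {a b : ℝ} (ha : 0 ≤ a) (hb : 0 ≤ b) (had : a < d)
    (hbd : b < d) (habd : d < a + b) :
    ∃ K, ∀ (x : Fin d → ℤ) (u : Finset (Fin d → ℤ)),
      ∑ y ∈ u, regNorm y ^ (-a) * regNorm (x - y) ^ (-b) ≤ K * regNorm x ^ ((d : ℝ) - (a + b)) := by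
  obtain ⟨Ka, hKa⟩ := exists_sum_ball_le ha had
  obtain ⟨Kb, hKb⟩ := exists_sum_ball_le hb hbd
  obtain ⟨Kt, hKt⟩ := exists_sum_tail_le habd
  refine ⟨(Ka + Kb + 2 * Kt) * 2 ^ (a + b - d), fun x u => ?_⟩
  set r := regNorm x / 2
  have hr₀ : 0 < r := div_pos (regNorm_pos x) two_pos
  have hra : r ^ ((d : ℝ) - a) * r ^ (-b) = r ^ ((d : ℝ) - (a + b)) := by
    rw [← Real.rpow_add hr₀]; ring_nf
  have hrb : r ^ (-a) * r ^ ((d : ℝ) - b) = r ^ ((d : ℝ) - (a + b)) := by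
    rw [← Real.rpow_add hr₀]; ring_nf
  have hball_sub : ∑ y ∈ u, (if regNorm (x - y) ≤ r then regNorm (x - y) ^ (-b) else 0)
      ≤ Kb * r ^ ((d : ℝ) - b) :=
    sum_sub_le_of_forall_sum_le (fun v => by rw [← sum_filter]; exact hKb r hr₀ v) x u
  have htail_sub : ∑ y ∈ u, (if r < regNorm (x - y) then regNorm (x - y) ^ (-(a + b)) else 0)
      ≤ Kt * r ^ ((d : ℝ) - (a + b)) :=
    sum_sub_le_of_forall_sum_le (fun v => by rw [← sum_filter]; exact hKt r hr₀ v) x u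
  calc ∑ y ∈ u, regNorm y ^ (-a) * regNorm (x - y) ^ (-b)
      ≤ ∑ y ∈ u, ((if regNorm y ≤ r then regNorm y ^ (-a) else 0) * r ^ (-b)
          + r ^ (-a) * (if regNorm (x - y) ≤ r then regNorm (x - y) ^ (-b) else 0)
          + (if r < regNorm y then regNorm y ^ (-(a + b)) else 0)
          + (if r < regNorm (x - y) then regNorm (x - y) ^ (-(a + b)) else 0)) :=
        sum_le_sum fun y _ => regNorm_rpow_mul_le ha hb (by ring) y
    _ = (∑ y ∈ u with regNorm y ≤ r, regNorm y ^ (-a)) * r ^ (-b)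
          + r ^ (-a) * ∑ y ∈ u, (if regNorm (x - y) ≤ r then regNorm (x - y) ^ (-b) else 0)
          + ∑ y ∈ u with r < regNorm y, regNorm y ^ (-(a + b))
          + ∑ y ∈ u, (if r < regNorm (x - y) then regNorm (x - y) ^ (-(a + b)) else 0) := by
        simp only [sum_add_distrib, sum_mul, mul_sum, sum_filter]
    _ ≤ Ka * r ^ ((d : ℝ) - a) * r ^ (-b) + r ^ (-a) * (Kb * r ^ ((d : ℝ) - b))
          + Kt * r ^ ((d : ℝ) - (a + b)) + Kt * r ^ ((d : ℝ) - (a + b)) := by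
        gcongr
        · exact hKa r hr₀ u
        · exact hKt r hr₀ u
    _ = (Ka + Kb + 2 * Kt) * r ^ ((d : ℝ) - (a + b)) := by
        rw [mul_assoc Ka, hra, mul_left_comm, hrb]; ring
    _ = (Ka + Kb + 2 * Kt) * 2 ^ (a + b - d) * regNorm x ^ ((d : ℝ) - (a + b)) := by
        rw [Real.div_rpow (regNorm_pos x).le zero_le_two, show a + b - d = -(d - (a + b)) by ring,
          Real.rpow_neg zero_le_two]
        ring

end Lattice

theorem stmt0_general (d : ℕ) (a b C₁ C₂ : ℝ) (hb : 0 < b) (hba : b ≤ a)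
    (had : a < d) (habd : (d : ℝ) < a + b) (f g : (Fin d → ℤ) → ℝ)
    (hf : ∀ x : Fin d → ℤ, x ≠ 0 → |f x| ≤ C₁ * znorm x ^ (-a))
    (hg : ∀ x : Fin d → ℤ, x ≠ 0 → |g x| ≤ C₂ * znorm x ^ (-b))
    (hf0 : |f 0| ≤ C₁) (hg0 : |g 0| ≤ C₂) :
    ∃ C : ℝ, ∀ x : Fin d → ℤ, x ≠ 0 →
      |∑' y : Fin d → ℤ, f y * g (x - y)| ≤ C * znorm x ^ ((d : ℝ) - (a + b)) := by
  have hC₁ : 0 ≤ C₁ := (abs_nonneg _).trans hf0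
  obtain ⟨K, hK⟩ :=
    exists_sum_regNorm_rpow_mul_le (by linarith) hb.le had (by linarith) habd
  refine ⟨C₁ * C₂ * K, fun x hx => abs_tsum_le_of_forall_sum_abs_le fun u => ?_⟩
  calc ∑ y ∈ u, |f y * g (x - y)|
      ≤ ∑ y ∈ u, C₁ * C₂ * (regNorm y ^ (-a) * regNorm (x - y) ^ (-b)) := by
        refine sum_le_sum fun y _ => ?_
        rw [abs_mul, mul_mul_mul_comm]
        exact mul_le_mul (abs_le_mul_regNorm_rpow hf hf0 y) (abs_le_mul_regNorm_rpow hg hg0 _)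
          (abs_nonneg _) (mul_nonneg hC₁ (regNorm_rpow_nonneg y _))
    _ ≤ C₁ * C₂ * K * znorm x ^ ((d : ℝ) - (a + b)) := by
        rw [← mul_sum, ← regNorm_of_ne_zero hx, mul_assoc (C₁ * C₂) K]
        exact mul_le_mul_of_nonneg_left (hK x u) (mul_nonneg hC₁ ((abs_nonneg _).trans hg0))

/-- Lemma 2.1 (first case): convolution estimate for functions decaying like
`‖x‖^{-a}` and `‖x‖^{-b}` with `b ≤ a < d < a + b`. -/
theorem stmt0 (d : ℕ) (hd : 2 ≤ d) (a b C₁ C₂ : ℝ) (hb : 0 < b) (hba : b ≤ a)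
    (had : a < d) (habd : (d : ℝ) < a + b) (f g : (Fin d → ℤ) → ℝ)
    (hf : ∀ x : Fin d → ℤ, x ≠ 0 → |f x| ≤ C₁ * znorm x ^ (-a))
    (hg : ∀ x : Fin d → ℤ, x ≠ 0 → |g x| ≤ C₂ * znorm x ^ (-b))
    (hf0 : |f 0| ≤ C₁) (hg0 : |g 0| ≤ C₂) :
    ∃ C : ℝ, ∀ x : Fin d → ℤ, x ≠ 0 →
      |∑' y : Fin d → ℤ, f y * g (x - y)| ≤ C * znorm x ^ ((d : ℝ) - (a + b)) :=
  stmt0_general d a b C₁ C₂ hb hba had habd f g hf hg hf0 hg0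
end

section
/- Let (Ω,ℱ,ℙ) be a probability space and (E_k)_{k≥1} a sequence of events. If limsup_{n→∞} (∑_{k=1}^{n} ℙ(E_k))² / (∑_{1≤i,j≤n} ℙ(E_i ∩ E_j)) > 0 and ∑_k ℙ(E_k) = ∞, then ℙ(limsup_k E_k) > 0; in fact ℙ(limsup_k E_k) ≥ limsup_{n→∞} (∑_{k=1}^{n} ℙ(E_k))² / (∑_{1≤i,j≤n} ℙ(E_i ∩ E_j)). -/
/-!
For `f = ∑_{k ∈ F} 1_{E_k}`, Cauchy–Schwarz against the indicator of `{f ≠ 0} = ⋃_{k ∈ F} E_k`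
gives `(∑ μ E_k)² ≤ (∑∑ μ (E_i ∩ E_j)) · μ (⋃_{k ∈ F} E_k)`. Taking `F = [m, n)` and letting
`n → ∞`, the divergence of the partial sums `S_n = ∑_{k < n} μ E_k` makes the loss from dropping
the first `m` events of order `S_m / S_n`, so the limsup of `S_n² / T_n` bounds every tail
`μ (⋃_{k ≥ m} E_k)`, and continuity from above passes the bound to `limsup E_k`.
-/

open MeasureTheory Filter Topology ENNReal Finset

theorem ENNReal.tendsto_sum_range_toReal_atTop {f : ℕ → ℝ≥0∞} (hf : ∀ k, f k ≠ ∞)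
    (hsum : ∑' k, f k = ∞) :
    Tendsto (fun n => ∑ k ∈ range n, (f k).toReal) atTop atTop := by
  refine (not_summable_iff_tendsto_nat_atTop_of_nonneg fun _ => toReal_nonneg).1 fun hs => ?_
  have h := ENNReal.ofReal_tsum_of_nonneg (fun _ => toReal_nonneg) hs
  simp only [ENNReal.ofReal_toReal (hf _), hsum] at h
  exact ENNReal.ofReal_ne_top h

section

variable {Ω : Type*} [MeasurableSpace Ω] {μ : Measure Ω}

theorem sq_lintegral_le_lintegral_sq_mul_measure {f : Ω → ℝ≥0∞} (hf : AEMeasurable f μ)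
    {A : Set Ω} (hA : MeasurableSet A) (hfA : ∀ ω ∉ A, f ω = 0) :
    (∫⁻ ω, f ω ∂μ) ^ 2 ≤ (∫⁻ ω, f ω ^ 2 ∂μ) * μ A := by
  set g : Ω → ℝ≥0∞ := A.indicator 1
  have hf_eq : f = f * g := by
    ext ω
    by_cases h : ω ∈ A <;> simp [g, h, hfA]
  have hg : ∫⁻ ω, g ω ^ (2 : ℝ) ∂μ = μ A := by
    rw [← lintegral_indicator_one hA]
    congr 1 with ω
    by_cases h : ω ∈ A <;> simp [g, h]
  have hholder := ENNReal.lintegral_mul_le_Lp_mul_Lq μ .two_two hf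
    (aemeasurable_one.indicator hA : AEMeasurable g μ)
  calc (∫⁻ ω, f ω ∂μ) ^ 2 = (∫⁻ ω, (f * g) ω ∂μ) ^ 2 := by rw [← hf_eq]
    _ ≤ ((∫⁻ ω, f ω ^ (2 : ℝ) ∂μ) ^ (1 / 2 : ℝ) * (μ A) ^ (1 / 2 : ℝ)) ^ 2 := by
      rw [← hg]; gcongr; exact hholder
    _ = (∫⁻ ω, f ω ^ 2 ∂μ) * μ A := by
      simp only [mul_pow, ← ENNReal.rpow_natCast, ← ENNReal.rpow_mul]
      norm_num

theorem sq_sum_measure_le_sum_measure_inter_mul_measure_biUnion {ι : Type*} {E : ι → Set Ω}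
    (hE : ∀ i, MeasurableSet (E i)) (F : Finset ι) :
    (∑ i ∈ F, μ (E i)) ^ 2 ≤ (∑ i ∈ F, ∑ j ∈ F, μ (E i ∩ E j)) * μ (⋃ i ∈ F, E i) := by
  set f : Ω → ℝ≥0∞ := fun ω => ∑ i ∈ F, (E i).indicator 1 ω
  have hf : Measurable f := Finset.measurable_sum _ fun i _ => measurable_one.indicator (hE i)
  have hf_int : ∫⁻ ω, f ω ∂μ = ∑ i ∈ F, μ (E i) := by
    rw [lintegral_finsetSum _ fun i _ => measurable_one.indicator (hE i)]
    simp only [lintegral_indicator_one (hE _)]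
  have hf_sq : ∫⁻ ω, f ω ^ 2 ∂μ = ∑ i ∈ F, ∑ j ∈ F, μ (E i ∩ E j) := by
    have hsq : ∀ ω, f ω ^ 2 = ∑ i ∈ F, ∑ j ∈ F, (E i ∩ E j).indicator 1 ω := fun ω => by
      simp only [f, sq, Finset.sum_mul_sum, Set.inter_indicator_one, Pi.mul_apply]
    simp only [hsq]
    rw [lintegral_finsetSum _ fun i _ => Finset.measurable_sum _ fun j _ =>
      measurable_one.indicator ((hE i).inter (hE j))]
    refine Finset.sum_congr rfl fun i _ => ?_
    rw [lintegral_finsetSum _ fun j _ => measurable_one.indicator ((hE i).inter (hE j))]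
    simp only [lintegral_indicator_one ((hE _).inter (hE _))]
  have hf_supp : ∀ ω ∉ ⋃ i ∈ F, E i, f ω = 0 := by
    intro ω hω
    refine Finset.sum_eq_zero fun i hi => Set.indicator_of_notMem (fun h => hω ?_) _
    exact Set.mem_biUnion hi h
  rw [← hf_int, ← hf_sq]
  exact sq_lintegral_le_lintegral_sq_mul_measure hf.aemeasurable
    (F.measurableSet_biUnion fun i _ => hE i) hf_supp

theorem sq_sum_measureReal_le_sum_measureReal_inter_mul [IsFiniteMeasure μ] {ι : Type*}
    {E : ι → Set Ω} (hE : ∀ i, MeasurableSet (E i)) (F : Finset ι) :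
    (∑ i ∈ F, μ.real (E i)) ^ 2 ≤
      (∑ i ∈ F, ∑ j ∈ F, μ.real (E i ∩ E j)) * μ.real (⋃ i ∈ F, E i) := by
  have h := ENNReal.toReal_mono (by simp [ENNReal.mul_eq_top])
    (sq_sum_measure_le_sum_measure_inter_mul_measure_biUnion (μ := μ) hE F)
  simpa [ENNReal.toReal_sum, measureReal_def] using h

theorem sq_sum_Ico_measureReal_le [IsFiniteMeasure μ] {E : ℕ → Set Ω}
    (hE : ∀ k, MeasurableSet (E k)) (m n : ℕ) :
    (∑ k ∈ Ico m n, μ.real (E k)) ^ 2 ≤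
      (∑ i ∈ range n, ∑ j ∈ range n, μ.real (E i ∩ E j)) * μ.real (⋃ k, ⋃ _ : m ≤ k, E k) := by
  have hIco : Ico m n ⊆ range n := fun k hk => mem_range.2 (mem_Ico.1 hk).2
  have hpairs : ∑ i ∈ Ico m n, ∑ j ∈ Ico m n, μ.real (E i ∩ E j) ≤
      ∑ i ∈ range n, ∑ j ∈ range n, μ.real (E i ∩ E j) :=
    calc _ ≤ ∑ i ∈ Ico m n, ∑ j ∈ range n, μ.real (E i ∩ E j) :=
          sum_le_sum fun i _ => sum_le_sum_of_subset_of_nonneg hIco fun _ _ _ => measureReal_nonneg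
      _ ≤ _ := sum_le_sum_of_subset_of_nonneg hIco fun _ _ _ =>
          sum_nonneg fun _ _ => measureReal_nonneg
  have htail : ⋃ k ∈ Ico m n, E k ⊆ ⋃ k, ⋃ _ : m ≤ k, E k :=
    Set.iUnion₂_mono' fun k hk => ⟨k, (mem_Ico.1 hk).1, subset_rfl⟩
  refine (sq_sum_measureReal_le_sum_measureReal_inter_mul hE _).trans ?_
  gcongr
  exact measure_ne_top _ _

theorem limsup_sq_sum_div_le_measureReal_tail [IsFiniteMeasure μ] {E : ℕ → Set Ω}
    (hE : ∀ k, MeasurableSet (E k))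
    (hS : Tendsto (fun n => ∑ k ∈ range n, μ.real (E k)) atTop atTop) (m : ℕ) :
    limsup (fun n => (∑ k ∈ range n, μ.real (E k)) ^ 2 /
        ∑ i ∈ range n, ∑ j ∈ range n, μ.real (E i ∩ E j)) atTop ≤
      μ.real (⋃ k, ⋃ _ : m ≤ k, E k) := by
  set S := fun n => ∑ k ∈ range n, μ.real (E k)
  set T := fun n => ∑ i ∈ range n, ∑ j ∈ range n, μ.real (E i ∩ E j)
  set x := μ.real (⋃ k, ⋃ _ : m ≤ k, E k)
  set U := μ.real Set.univ
  have hbound : ∀ᶠ n in atTop, S n ^ 2 / T n ≤ x + 2 * S m * U / S n := by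
    filter_upwards [eventually_ge_atTop m, hS.eventually_gt_atTop 0] with n hmn hSn
    have htail : (S n - S m) ^ 2 ≤ T n * x := by
      rw [← sum_Ico_eq_sub _ hmn]
      exact sq_sum_Ico_measureReal_le hE m n
    have hfull : S n ^ 2 ≤ T n * U :=
      (sq_sum_measureReal_le_sum_measureReal_inter_mul hE _).trans
        (by gcongr; exact measureReal_mono (Set.subset_univ _))
    have hSm : 0 ≤ S m := sum_nonneg fun k _ => measureReal_nonneg
    have hT : 0 < T n := pos_of_mul_pos_left ((pow_pos hSn 2).trans_le hfull) measureReal_nonneg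
    have hcross : 2 * S m * S n ≤ 2 * S m * U / S n * T n := by
      rw [div_mul_eq_mul_div, le_div_iff₀ hSn]
      nlinarith
    rw [div_le_iff₀ hT]
    nlinarith [(measureReal_nonneg : 0 ≤ x)]
  have hlim : Tendsto (fun n => x + 2 * S m * U / S n) atTop (𝓝 x) := by
    simpa using tendsto_const_nhds.add (tendsto_const_nhds.div_atTop hS)
  calc limsup (fun n => S n ^ 2 / T n) atTop ≤ limsup (fun n => x + 2 * S m * U / S n) atTop :=
        limsup_le_limsup hbound (isCoboundedUnder_le_of_le atTop fun n => by positivity)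
          hlim.isBoundedUnder_le
    _ = x := hlim.limsup_eq

theorem tendsto_measureReal_iInter_atTop [IsFiniteMeasure μ] {ι : Type*} [Preorder ι]
    [IsCountablyGenerated (atTop : Filter ι)] {A : ι → Set Ω}
    (hA : ∀ i, NullMeasurableSet (A i) μ) (hanti : Antitone A) :
    Tendsto (fun i => μ.real (A i)) atTop (𝓝 (μ.real (⋂ i, A i))) := by
  refine .of_neBot_imp fun h => ?_
  obtain ⟨i⟩ := (atTop_neBot_iff.1 h).1
  exact (ENNReal.tendsto_toReal (measure_ne_top _ _)).comp
    (tendsto_measure_iInter_atTop hA hanti ⟨i, measure_ne_top _ _⟩)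

end

/-- Kochen–Stone version of the second Borel–Cantelli lemma. -/
theorem stmt2 {Ω : Type*} [MeasurableSpace Ω] (μ : Measure Ω)
    [IsProbabilityMeasure μ] (E : ℕ → Set Ω) (hE : ∀ k, MeasurableSet (E k))
    (hdiv : ∑' k, μ (E k) = ⊤) (L : ℝ)
    (hL : L = limsup (fun n => (∑ k ∈ Finset.range n, (μ (E k)).toReal) ^ 2 /
        (∑ i ∈ Finset.range n, ∑ j ∈ Finset.range n, (μ (E i ∩ E j)).toReal)) atTop)
    (hpos : 0 < L) :
    0 < (μ (⋂ n, ⋃ k, ⋃ _ : n ≤ k, E k)).toReal ∧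
      L ≤ (μ (⋂ n, ⋃ k, ⋃ _ : n ≤ k, E k)).toReal := by
  have hS : Tendsto (fun n => ∑ k ∈ range n, μ.real (E k)) atTop atTop :=
    ENNReal.tendsto_sum_range_toReal_atTop (fun _ => measure_ne_top _ _) hdiv
  have htail : ∀ m, L ≤ μ.real (⋃ k, ⋃ _ : m ≤ k, E k) :=
    hL ▸ limsup_sq_sum_div_le_measureReal_tail hE hS
  have hanti : Antitone fun m => ⋃ k, ⋃ _ : m ≤ k, E k := fun m m' hmm' =>
    Set.iUnion₂_mono' fun k hk => ⟨k, hmm'.trans hk, subset_rfl⟩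
  have hmeas : ∀ m, NullMeasurableSet (⋃ k, ⋃ _ : m ≤ k, E k) μ := fun m =>
    (MeasurableSet.iUnion fun k => .iUnion fun _ => hE k).nullMeasurableSet
  have hlimsup : L ≤ μ.real (⋂ m, ⋃ k, ⋃ _ : m ≤ k, E k) :=
    ge_of_tendsto' (tendsto_measureReal_iInter_atTop hmeas hanti) htail
  exact ⟨hpos.trans_le hlimsup, hlimsup⟩
end

section
/- Let T be a finite tree with vertex set V and weight function α : E(T) → ℝ, let y be a vertex adjacent to two leaves ∂ and ∂'. Let T' = T \ {∂'} with weight α' equal to α except α'(y,∂) = α(y,∂) + α(y,∂'). Then for every map φ : V(T)\{∂,∂'} → ℤ^d and points x, x' ∈ ℤ^d, writing p_ψ(S) = ∏_{(u,v)∈E(S)} 1/(1+‖ψ(u)−ψ(v)‖^{α(u,v)}), one has p_{φ[∂↦x, ∂'↦x']}(T) ≤ C ( p_{φ[∂↦x]}(T') + p_{φ[∂↦x']}(T') ) for a constant C depending only on the weights. -/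
/-- Weight of a (oriented) edge set `E` with edge exponents `α` and vertex
labelling `ψ` into `ℤ^d`: the product over edges of `1/(1+‖ψu-ψv‖^{α(u,v)})`. -/
noncomputable def edgesWeight {V : Type*} {d : ℕ} (E : Finset (V × V))
    (α : V × V → ℝ) (ψ : V → (Fin d → ℤ)) : ℝ :=
  ∏ e ∈ E, 1 / (1 + znorm (ψ e.1 - ψ e.2) ^ α e)

/-!
Only the two leaf edges change, so after splitting them off the claim reduces, with
`a = ‖φ y - x‖`, `b = ‖φ y - x'‖`, `s = α(y,∂)`, `t = α(y,∂')`, to the scalar inequality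
`1 / ((1 + a^s) (1 + b^t)) ≤ 2 (1 / (1 + a^(s+t)) + 1 / (1 + b^(s+t)))`, so `C = 2`.
It follows from `min (a^(s+t)) (b^(s+t)) ≤ max 1 a^s b^t (a^s b^t)`. In logarithms `A`, `B`
this can only fail if `t A > 0`, `s B > 0`, `t (A - B) > 0` and `s (B - A) > 0`; these force
`s t < 0` and then `A B < 0`, so `(s+t) A` and `(s+t) B` cannot both be positive.
-/

open Real

theorem min_mul_add_le_max (A B s t : ℝ) :
    min (A * (s + t)) (B * (s + t)) ≤ max (max 0 (A * s)) (max (B * t) (A * s + B * t)) := by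
  by_contra! h
  simp only [lt_min_iff, max_lt_iff] at h
  obtain ⟨⟨⟨hA0, hAs⟩, -, hAst⟩, ⟨hB0, -⟩, hBt, hBst⟩ := h
  have hst : s * t < 0 := by
    by_contra! hst
    nlinarith [mul_pos (sub_pos.2 hAst) (sub_pos.2 hBst), mul_nonneg hst (sq_nonneg (A - B))]
  have hAB : A * B < 0 := by
    by_contra! hAB
    nlinarith [mul_pos (sub_pos.2 hAs) (sub_pos.2 hBt), mul_nonneg hAB (neg_nonneg.2 hst.le)]
  nlinarith [mul_pos hA0 hB0, mul_nonneg (neg_nonneg.2 hAB.le) (sq_nonneg (s + t))]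

theorem min_rpow_add_le_mul {a b : ℝ} (ha : 0 ≤ a) (hb : 0 ≤ b) (s t : ℝ) :
    min (a ^ (s + t)) (b ^ (s + t)) ≤ (1 + a ^ s) * (1 + b ^ t) := by
  have has := rpow_nonneg ha s
  have hbt := rpow_nonneg hb t
  have hone : 1 ≤ (1 + a ^ s) * (1 + b ^ t) := by nlinarith
  rcases ha.eq_or_lt with rfl | ha
  · exact (min_le_left _ _).trans ((zero_rpow_le_one _).trans hone)
  rcases hb.eq_or_lt with rfl | hb
  · exact (min_le_right _ _).trans ((zero_rpow_le_one _).trans hone)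
  simp only [rpow_def_of_pos ha, rpow_def_of_pos hb] at has hbt ⊢
  rw [← exp_monotone.map_min]
  refine (exp_le_exp.2 (min_mul_add_le_max _ _ s t)).trans ?_
  simp only [exp_monotone.map_max, exp_zero, exp_add, max_le_iff]
  refine ⟨⟨?_, ?_⟩, ?_, ?_⟩ <;> nlinarith

theorem one_div_le_two_mul_add_of_min_le {P u v : ℝ} (hP : 1 ≤ P) (hu : 0 ≤ u) (hv : 0 ≤ v)
    (h : min u v ≤ P) : 1 / P ≤ 2 * (1 / (1 + u) + 1 / (1 + v)) := by
  have hbound : ∀ w, 0 ≤ w → w ≤ P → 1 / P ≤ 2 * (1 / (1 + w)) := fun w hw hwP => by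
    rw [mul_one_div, div_le_div_iff₀ (by linarith) (by linarith)]
    linarith
  have hu' : 0 ≤ 1 / (1 + u) := by positivity
  have hv' : 0 ≤ 1 / (1 + v) := by positivity
  rcases min_le_iff.1 h with h | h
  · linarith [hbound u hu h]
  · linarith [hbound v hv h]

theorem one_div_one_add_rpow_mul_le {a b : ℝ} (ha : 0 ≤ a) (hb : 0 ≤ b) (s t : ℝ) :
    1 / (1 + a ^ s) * (1 / (1 + b ^ t)) ≤
      2 * (1 / (1 + a ^ (s + t)) + 1 / (1 + b ^ (s + t))) := by
  have has := rpow_nonneg ha s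
  have hbt := rpow_nonneg hb t
  rw [one_div_mul_one_div]
  exact one_div_le_two_mul_add_of_min_le (by nlinarith) (rpow_nonneg ha _) (rpow_nonneg hb _)
    (min_rpow_add_le_mul ha hb s t)

namespace SimpleGraph

variable {V : Type*} {G : SimpleGraph V}

theorem eq_of_adj_of_degree_eq_one {v u w : V} [Fintype (G.neighborSet v)]
    (hdeg : G.degree v = 1) (hu : G.Adj v u) (hw : G.Adj v w) : u = w :=
  (degree_eq_one_iff_existsUnique_adj.1 hdeg).unique hu hw

theorem injOn_sym2Mk_of_card_eq [Fintype G.edgeSet] {E : Finset (V × V)}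
    (hEadj : ∀ e ∈ E, G.Adj e.1 e.2) (hEcover : ∀ u v, G.Adj u v → (u, v) ∈ E ∨ (v, u) ∈ E)
    (hEcard : E.card = G.edgeFinset.card) : Set.InjOn (fun e : V × V => s(e.1, e.2)) E := by
  refine Finset.injOn_of_surjOn_of_card_le _ (t := G.edgeFinset) (fun e he => ?_) (fun z hz => ?_)
    hEcard.le
  · simpa using hEadj e he
  · induction z using Sym2.ind with
    | _ u v =>
      rcases hEcover u v (by simpa using hz) with h | h
      · exact ⟨(u, v), h, rfl⟩
      · exact ⟨(v, u), h, Sym2.eq_swap⟩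

theorem ne_of_mem_of_degree_eq_one {E : Finset (V × V)} {y p : V} [Fintype (G.neighborSet p)]
    (hinj : Set.InjOn (fun e : V × V => s(e.1, e.2)) E) (hEadj : ∀ e ∈ E, G.Adj e.1 e.2)
    (hdeg : G.degree p = 1) (hmem : (y, p) ∈ E) {e : V × V} (he : e ∈ E) (hne : e ≠ (y, p)) :
    e.1 ≠ p ∧ e.2 ≠ p := by
  have hpy : G.Adj p y := (hEadj _ hmem).symm
  constructor
  · intro h1
    have h2 : e.2 = y := eq_of_adj_of_degree_eq_one hdeg (h1 ▸ hEadj e he) hpy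
    refine hne (hinj he hmem ?_)
    simp only [h1, h2]
    exact Sym2.eq_swap
  · intro h2
    have h1 : e.1 = y := eq_of_adj_of_degree_eq_one hdeg (h2 ▸ hEadj e he).symm hpy
    exact hne (Prod.ext h1 h2)

end SimpleGraph

section edgesWeight

variable {V : Type*} {d : ℕ} {E : Finset (V × V)} {α : V × V → ℝ} {ψ : V → (Fin d → ℤ)}

theorem znorm_nonneg (x : Fin d → ℤ) : 0 ≤ znorm x := sqrt_nonneg _

theorem edgesWeight_nonneg : 0 ≤ edgesWeight E α ψ :=
  Finset.prod_nonneg fun e _ => by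
    have := rpow_nonneg (znorm_nonneg (ψ e.1 - ψ e.2)) (α e)
    positivity

theorem edgesWeight_eq_mul_erase [DecidableEq V] {e : V × V} (he : e ∈ E) :
    edgesWeight E α ψ = 1 / (1 + znorm (ψ e.1 - ψ e.2) ^ α e) * edgesWeight (E.erase e) α ψ :=
  (Finset.mul_prod_erase E _ he).symm

theorem edgesWeight_congr_left {α' : V × V → ℝ} (h : ∀ e ∈ E, α e = α' e) :
    edgesWeight E α ψ = edgesWeight E α' ψ :=
  Finset.prod_congr rfl fun e he => by rw [h e he]

theorem edgesWeight_update_of_forall_ne [DecidableEq V] {v : V} (z : Fin d → ℤ)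
    (h : ∀ e ∈ E, e.1 ≠ v ∧ e.2 ≠ v) :
    edgesWeight E α (Function.update ψ v z) = edgesWeight E α ψ :=
  Finset.prod_congr rfl fun e he => by
    rw [Function.update_of_ne (h e he).1, Function.update_of_ne (h e he).2]

end edgesWeight

theorem stmt9_general {V : Type*} [Fintype V] [DecidableEq V] {d : ℕ}
    (G : SimpleGraph V) [DecidableRel G.Adj]
    (E : Finset (V × V)) (hEadj : ∀ e ∈ E, G.Adj e.1 e.2)
    (hEcover : ∀ u v : V, G.Adj u v → (u, v) ∈ E ∨ (v, u) ∈ E)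
    (hEcard : E.card = G.edgeFinset.card)
    (y p p' : V) (hpp' : p ≠ p')
    (hdegp : G.degree p = 1) (hdegp' : G.degree p' = 1)
    (hadj : G.Adj y p) (hadj' : G.Adj y p')
    (hmem : (y, p) ∈ E) (hmem' : (y, p') ∈ E)
    (α : V × V → ℝ) :
    ∃ C : ℝ, 0 < C ∧ ∀ (φ : V → (Fin d → ℤ)) (x x' : Fin d → ℤ),
      edgesWeight E α (Function.update (Function.update φ p x) p' x') ≤
        C * (edgesWeight (E.erase (y, p'))
                (Function.update α (y, p) (α (y, p) + α (y, p')))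
                (Function.update (Function.update φ p x) p' x') +
             edgesWeight (E.erase (y, p'))
                (Function.update α (y, p) (α (y, p) + α (y, p')))
                (Function.update (Function.update φ p x') p' x')) := by
  have hinj := G.injOn_sym2Mk_of_card_eq hEadj hEcover hEcard
  have hmem_erase : (y, p) ∈ E.erase (y, p') :=
    Finset.mem_erase.2 ⟨fun h => hpp' (congrArg Prod.snd h), hmem⟩
  set F := (E.erase (y, p')).erase (y, p)
  have hF : ∀ e ∈ F, (e.1 ≠ p ∧ e.2 ≠ p) ∧ (e.1 ≠ p' ∧ e.2 ≠ p') := by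
    intro e he
    simp only [F, Finset.mem_erase] at he
    exact ⟨G.ne_of_mem_of_degree_eq_one hinj hEadj hdegp hmem he.2.2 he.1,
      G.ne_of_mem_of_degree_eq_one hinj hEadj hdegp' hmem' he.2.2 he.2.1⟩
  refine ⟨2, two_pos, fun φ x x' => ?_⟩
  have hF_weight : ∀ z z', edgesWeight F α (Function.update (Function.update φ p z) p' z') =
      edgesWeight F α φ := fun z z' => by
    rw [edgesWeight_update_of_forall_ne _ fun e he => (hF e he).2,
      edgesWeight_update_of_forall_ne _ fun e he => (hF e he).1]
  have hsplit : edgesWeight E α (Function.update (Function.update φ p x) p' x') =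
      1 / (1 + znorm (φ y - x) ^ α (y, p)) * (1 / (1 + znorm (φ y - x') ^ α (y, p'))) *
        edgesWeight F α φ := by
    rw [edgesWeight_eq_mul_erase hmem', edgesWeight_eq_mul_erase hmem_erase, hF_weight]
    simp only [Function.update_self, Function.update_of_ne hadj.ne, Function.update_of_ne hadj'.ne,
      Function.update_of_ne hpp']
    ring
  have hcut : ∀ z, edgesWeight (E.erase (y, p')) (Function.update α (y, p) (α (y, p) + α (y, p')))
      (Function.update (Function.update φ p z) p' x') =
      1 / (1 + znorm (φ y - z) ^ (α (y, p) + α (y, p'))) * edgesWeight F α φ := fun z => by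
    rw [edgesWeight_eq_mul_erase hmem_erase, edgesWeight_congr_left (α' := α)
      fun e he => Function.update_of_ne (Finset.ne_of_mem_erase he) _ _, hF_weight]
    simp [hadj.ne, hadj'.ne, hpp']
  rw [hsplit, hcut, hcut, ← add_mul, ← mul_assoc]
  exact mul_le_mul_of_nonneg_right
    (one_div_one_add_rpow_mul_le (znorm_nonneg _) (znorm_nonneg _) _ _) edgesWeight_nonneg

/-- The cut operation (Lemma 4.7): if `y` is adjacent to two leaves `p, p'` of
a tree `T` (with oriented edge set `E`), removing the leaf `p'` and adding its
edge weight to that of the edge `(y,p)` bounds the weight of `T`, up to a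
constant, by the sum of the weights of the reduced tree with `p` labelled by
`x` and by `x'` respectively. -/
theorem stmt9 {V : Type*} [Fintype V] [DecidableEq V] {d : ℕ}
    (G : SimpleGraph V) [DecidableRel G.Adj] (hG : G.IsTree)
    (E : Finset (V × V)) (hEadj : ∀ e ∈ E, G.Adj e.1 e.2)
    (hEcover : ∀ u v : V, G.Adj u v → (u, v) ∈ E ∨ (v, u) ∈ E)
    (hEcard : E.card = G.edgeFinset.card)
    (y p p' : V) (hpp' : p ≠ p')
    (hdegp : G.degree p = 1) (hdegp' : G.degree p' = 1)
    (hadj : G.Adj y p) (hadj' : G.Adj y p')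
    (hmem : (y, p) ∈ E) (hmem' : (y, p') ∈ E)
    (α : V × V → ℝ) :
    ∃ C : ℝ, 0 < C ∧ ∀ (φ : V → (Fin d → ℤ)) (x x' : Fin d → ℤ),
      edgesWeight E α (Function.update (Function.update φ p x) p' x') ≤
        C * (edgesWeight (E.erase (y, p'))
                (Function.update α (y, p) (α (y, p) + α (y, p')))
                (Function.update (Function.update φ p x) p' x') +
             edgesWeight (E.erase (y, p'))
                (Function.update α (y, p) (α (y, p) + α (y, p')))
                (Function.update (Function.update φ p x') p' x')) :=
  stmt9_general G E hEadj hEcover hEcard y p p' hpp' hdegp hdegp' hadj hadj' hmem hmem' α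
end

section
/- Let d ≥ 9 and k ≥ 2, and n < n(k,d) := ⌈d(k−1)/4⌉ − (k−2). Suppose nonnegative integers x_f ≥ 1, y_f, k_T ≥ 1, n_T satisfy: x_f + k_T = k, y_f ≤ n − n_T, and n_T ≥ n(k_T, d). Then 4 y_f ≤ (d−4) x_f − 1. -/
/-- Arithmetic core of the second merge obstruction in Lemma 4.10: if
`n < n(k,d)`, `x_f + k_T = k`, `y_f ≤ n - n_T` and `n_T ≥ n(k_T,d)`, then
`4 y_f ≤ (d-4) x_f - 1`. -/
theorem stmt13 (d k n xf yf kT nT : ℤ) (hd : 9 ≤ d) (hk : 2 ≤ k)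
    (hn : n < ⌈((d : ℚ) * ((k : ℚ) - 1)) / 4⌉ - (k - 2))
    (hxf : 1 ≤ xf) (hyf : 0 ≤ yf) (hkT : 1 ≤ kT) (hnT : 0 ≤ nT)
    (hsum : xf + kT = k) (hyfn : yf ≤ n - nT)
    (hnTlb : nT ≥ ⌈((d : ℚ) * ((kT : ℚ) - 1)) / 4⌉ - (kT - 2)) :
    4 * yf ≤ (d - 4) * xf - 1 := by
  have h1 : (⌈((d : ℚ) * ((k : ℚ) - 1)) / 4⌉ : ℚ) < (d : ℚ) * ((k : ℚ) - 1) / 4 + 1 :=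
    Int.ceil_lt_add_one _
  have h2 : ((d : ℚ) * ((kT : ℚ) - 1)) / 4 ≤ (⌈((d : ℚ) * ((kT : ℚ) - 1)) / 4⌉ : ℚ) :=
    Int.le_ceil _
  have key : (4 * yf : ℚ) < ((d : ℚ) - 4) * xf := by
    have hn' : (n : ℚ) ≤ (⌈((d : ℚ) * ((k : ℚ) - 1)) / 4⌉ : ℚ) - ((k : ℚ) - 2) - 1 := by
      exact_mod_cast Int.le_sub_one_of_lt hn
    have hnT' : (⌈((d : ℚ) * ((kT : ℚ) - 1)) / 4⌉ : ℚ) - ((kT : ℚ) - 2) ≤ (nT : ℚ) := by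
      exact_mod_cast hnTlb
    have hyfn' : (yf : ℚ) ≤ (n : ℚ) - nT := by exact_mod_cast hyfn
    have hsum' : (xf : ℚ) + kT = k := by exact_mod_cast hsum
    have hdx : (d : ℚ) * ((k : ℚ) - 1) - (d : ℚ) * ((kT : ℚ) - 1) = (d : ℚ) * xf := by
      rw [← hsum']; ring
    linarith
  have : 4 * yf < (d - 4) * xf := by exact_mod_cast key
  omega
end

section
/- Let g : ℤ^d → ℝ₊ satisfy g(x) ≤ C/(1+‖x‖^{d−2}) for d ≥ 5, and define G = g * g (discrete convolution). Then there is C' with G(x) ≤ C'/(1+‖x‖^{d−4}) for all x ∈ ℤ^d, and if additionally g(x) ≥ c/(1+‖x‖^{d−2}) then G(x) ≥ c'/(1+‖x‖^{d−4}). -/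
open Finset

section SupNorm

variable {d : ℕ}

def supNorm (y : Fin d → ℤ) : ℕ := univ.sup fun i => (y i).natAbs

lemma natAbs_le_supNorm (y : Fin d → ℤ) (i : Fin d) : (y i).natAbs ≤ supNorm y :=
  le_sup (f := fun i => (y i).natAbs) (mem_univ i)

lemma supNorm_le_iff {y : Fin d → ℤ} {n : ℕ} : supNorm y ≤ n ↔ ∀ i, (y i).natAbs ≤ n := by
  simp [supNorm]

lemma supNorm_add_le (x y : Fin d → ℤ) : supNorm (x + y) ≤ supNorm x + supNorm y :=
  supNorm_le_iff.2 fun i => (Int.natAbs_add_le _ _).trans <|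
    add_le_add (natAbs_le_supNorm x i) (natAbs_le_supNorm y i)

lemma supNorm_sub_le (x y : Fin d → ℤ) : supNorm (x - y) ≤ supNorm x + supNorm y := by
  simpa [sub_eq_add_neg, supNorm] using supNorm_add_le x (-y)

lemma abs_le_znorm (y : Fin d → ℤ) (i : Fin d) : |(y i : ℝ)| ≤ znorm y :=
  Real.abs_le_sqrt <| single_le_sum (f := fun j => (y j : ℝ) ^ 2)
    (fun _ _ => sq_nonneg _) (mem_univ i)

lemma supNorm_le_znorm (y : Fin d → ℤ) : (supNorm y : ℝ) ≤ znorm y := by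
  have : supNorm y ≤ ⌊znorm y⌋₊ := supNorm_le_iff.2 fun i =>
    Nat.le_floor <| by simpa [Nat.cast_natAbs] using abs_le_znorm y i
  exact (Nat.cast_le.2 this).trans (Nat.floor_le (Real.sqrt_nonneg _))

lemma znorm_le_sqrt_mul_supNorm (y : Fin d → ℤ) : znorm y ≤ √d * supNorm y := by
  have hcoord : ∀ i, (y i : ℝ) ^ 2 ≤ (supNorm y : ℝ) ^ 2 := fun i => by
    rw [← sq_abs]
    gcongr
    simpa [Nat.cast_natAbs] using (Nat.cast_le (α := ℝ)).2 (natAbs_le_supNorm y i)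
  calc znorm y ≤ √(d * (supNorm y : ℝ) ^ 2) :=
        Real.sqrt_le_sqrt <| by simpa using sum_le_sum fun i (_ : i ∈ univ) => hcoord i
    _ = √d * supNorm y := by
      rw [Real.sqrt_mul (Nat.cast_nonneg d), Real.sqrt_sq (Nat.cast_nonneg _)]

noncomputable def supBall (d n : ℕ) : Finset (Fin d → ℤ) :=
  Fintype.piFinset fun _ => Icc (-(n : ℤ)) n

noncomputable def supSphere (d n : ℕ) : Finset (Fin d → ℤ) := {y ∈ supBall d n | supNorm y = n}

lemma mem_supBall {n : ℕ} {y : Fin d → ℤ} : y ∈ supBall d n ↔ supNorm y ≤ n := by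
  simp only [supBall, Fintype.mem_piFinset, mem_Icc, supNorm_le_iff]
  exact forall_congr' fun i => by omega

lemma card_supBall (d n : ℕ) : #(supBall d n) = (2 * n + 1) ^ d := by
  simp only [supBall, Fintype.card_piFinset, Int.card_Icc, prod_const, card_univ,
    Fintype.card_fin]
  congr 1
  omega

lemma card_supSphere_le [NeZero d] (n : ℕ) : #(supSphere d n) ≤ 2 * d * (2 * n + 1) ^ (d - 1) := by
  let face : Fin d → Finset (Fin d → ℤ) := fun i =>
    Fintype.piFinset (Function.update (fun _ => Icc (-(n : ℤ)) n) i {-(n : ℤ), (n : ℤ)})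
  have hsub : supSphere d n ⊆ univ.biUnion face := by
    intro y hy
    obtain ⟨hball, hnorm⟩ := mem_filter.1 hy
    obtain ⟨i, -, hi⟩ := exists_mem_eq_sup univ univ_nonempty fun i => (y i).natAbs
    refine mem_biUnion.2 ⟨i, mem_univ i, Fintype.mem_piFinset.2 fun j => ?_⟩
    rcases eq_or_ne j i with rfl | hji
    · have : (y j).natAbs = n := hi ▸ hnorm
      simp only [Function.update_self, mem_insert, mem_singleton]
      omega
    · rw [Function.update_of_ne hji]
      exact (Fintype.mem_piFinset.1 hball) j
  have hface : ∀ i, #(face i) ≤ 2 * (2 * n + 1) ^ (d - 1) := fun i => by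
    have hcard : ∀ j, #(Function.update (fun _ => Icc (-(n : ℤ)) n) i {-(n : ℤ), (n : ℤ)} j)
        ≤ Function.update (fun _ => 2 * n + 1) i 2 j := fun j => by
      rcases eq_or_ne j i with rfl | hji
      · simpa using card_le_two
      · simp only [Function.update_of_ne hji, Int.card_Icc]
        omega
    calc #(face i) ≤ ∏ j, Function.update (fun _ => 2 * n + 1) i 2 j :=
          (Fintype.card_piFinset _).trans_le (prod_le_prod' fun j _ => hcard j)
      _ = 2 * (2 * n + 1) ^ (d - 1) := by
          rw [prod_update_of_mem (mem_univ i), prod_const, card_univ_sdiff]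
          simp
  calc #(supSphere d n) ≤ #(univ.biUnion face) := card_le_card hsub
    _ ≤ ∑ i, #(face i) := card_biUnion_le
    _ ≤ ∑ _i : Fin d, 2 * (2 * n + 1) ^ (d - 1) := sum_le_sum fun i _ => hface i
    _ = 2 * d * (2 * n + 1) ^ (d - 1) := by
        rw [sum_const, card_univ, Fintype.card_fin, smul_eq_mul]
        ring

end SupNorm

section PolyDecay

noncomputable def polyDecay (a t : ℝ) : ℝ := (1 + t) ^ (-a)

variable {a b p s t : ℝ}

lemma polyDecay_pos (ht : 0 ≤ t) : 0 < polyDecay a t :=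
  Real.rpow_pos_of_pos (by linarith) _

lemma polyDecay_le_polyDecay (ha : 0 ≤ a) (hs : 0 ≤ s) (hst : s ≤ t) :
    polyDecay a t ≤ polyDecay a s :=
  Real.rpow_le_rpow_of_nonpos (by linarith) (by linarith) (by linarith)

lemma polyDecay_mul_polyDecay (ht : 0 ≤ t) :
    polyDecay a t * polyDecay b t = polyDecay (a + b) t := by
  rw [polyDecay, polyDecay, polyDecay, ← Real.rpow_add (by linarith), neg_add]

lemma rpow_mul_polyDecay (ht : 0 ≤ t) : (1 + t) ^ b * polyDecay a t = polyDecay (a - b) t := by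
  rw [polyDecay, polyDecay, ← Real.rpow_add (by linarith)]
  ring_nf

lemma polyDecay_le_two_rpow_mul (ha : 0 ≤ a) (hs : 0 ≤ s) (hst : s ≤ 2 * t) :
    polyDecay a t ≤ 2 ^ a * polyDecay a s := by
  calc polyDecay a t ≤ ((1 + s) / 2) ^ (-a) :=
        Real.rpow_le_rpow_of_nonpos (by linarith) (by linarith) (by linarith)
    _ = 2 ^ a * polyDecay a s := by
        rw [Real.div_rpow (by linarith) zero_le_two, Real.rpow_neg zero_le_two, polyDecay]
        field_simp

lemma one_add_rpow_le_two_rpow_mul (ht : 0 ≤ t) (hp : 0 ≤ p) :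
    (1 + t) ^ p ≤ 2 ^ p * (1 + t ^ p) := by
  have htp : 0 ≤ t ^ p := Real.rpow_nonneg ht p
  rcases le_total t 1 with h | h
  · calc (1 + t) ^ p ≤ 2 ^ p := Real.rpow_le_rpow (by linarith) (by linarith) hp
      _ ≤ 2 ^ p * (1 + t ^ p) := le_mul_of_one_le_right (by positivity) (by linarith)
  · calc (1 + t) ^ p ≤ (2 * t) ^ p := Real.rpow_le_rpow (by linarith) (by linarith) hp
      _ = 2 ^ p * t ^ p := Real.mul_rpow zero_le_two ht
      _ ≤ 2 ^ p * (1 + t ^ p) := by gcongr; linarith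

lemma one_add_rpow_le_two_mul (ht : 0 ≤ t) (hp : 0 ≤ p) : 1 + t ^ p ≤ 2 * (1 + t) ^ p := by
  have h1 : 1 ≤ (1 + t) ^ p := Real.one_le_rpow (by linarith) hp
  have h2 : t ^ p ≤ (1 + t) ^ p := Real.rpow_le_rpow ht (by linarith) hp
  linarith

lemma inv_one_add_rpow_le_polyDecay (hs : 0 ≤ s) (hst : s ≤ t) (hp : 0 ≤ p) :
    (1 + t ^ p)⁻¹ ≤ 2 ^ p * polyDecay p s := by
  have hsp : 0 < (1 + s) ^ p := Real.rpow_pos_of_pos (by linarith) p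
  have key : (1 + s) ^ p ≤ (1 + t ^ p) * 2 ^ p :=
    (one_add_rpow_le_two_rpow_mul hs hp).trans_eq (mul_comm _ _) |>.trans <| by
      gcongr
  rw [polyDecay, Real.rpow_neg (by linarith), ← div_eq_mul_inv, le_div_iff₀ hsp,
    inv_mul_le_iff₀ (by have := Real.rpow_nonneg (hs.trans hst) p; linarith)]
  exact key

lemma polyDecay_le_inv_one_add_rpow {l : ℝ} (hl : 1 ≤ l) (hs : 0 ≤ s) (ht : 0 ≤ t)
    (hts : t ≤ l * s) (hp : 0 ≤ p) : polyDecay p s ≤ 2 * l ^ p * (1 + t ^ p)⁻¹ := by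
  have hlp : 1 ≤ l ^ p := Real.one_le_rpow hl hp
  have key : 1 + t ^ p ≤ (1 + s) ^ p * (2 * l ^ p) :=
    calc 1 + t ^ p ≤ 1 + (l * s) ^ p := by gcongr
      _ = 1 + l ^ p * s ^ p := by rw [Real.mul_rpow (by linarith) hs]
      _ ≤ l ^ p * (1 + s ^ p) := by nlinarith
      _ ≤ l ^ p * (2 * (1 + s) ^ p) := by gcongr; exact one_add_rpow_le_two_mul hs hp
      _ = (1 + s) ^ p * (2 * l ^ p) := by ring
  rw [polyDecay, Real.rpow_neg (by linarith), ← div_eq_mul_inv, le_div_iff₀ (by positivity),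
    inv_mul_le_iff₀ (Real.rpow_pos_of_pos (by linarith) p)]
  exact key

lemma div_mul_polyDecay_le_div {c l : ℝ} (hc : 0 ≤ c) (hl : 1 ≤ l) (hs : 0 ≤ s) (ht : 0 ≤ t)
    (hts : t ≤ l * s) (hp : 0 ≤ p) : c / (2 * l ^ p) * polyDecay p s ≤ c / (1 + t ^ p) := by
  have hlp : 0 < l ^ p := Real.rpow_pos_of_pos (by linarith) p
  calc c / (2 * l ^ p) * polyDecay p s ≤ c / (2 * l ^ p) * (2 * l ^ p * (1 + t ^ p)⁻¹) := by
        gcongr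
        exact polyDecay_le_inv_one_add_rpow hl hs ht hts hp
    _ = c / (1 + t ^ p) := by field_simp

lemma rpow_mul_polyDecay_sq (ht : 0 ≤ t) :
    (1 + t) ^ b * polyDecay a t ^ 2 = polyDecay (2 * a - b) t := by
  rw [sq, polyDecay_mul_polyDecay ht, rpow_mul_polyDecay ht, ← two_mul]

end PolyDecay

section RadialSums

lemma sum_Ioc_inv_one_add_sq_le (R N : ℕ) :
    ∑ m ∈ Ioc R N, ((1 + (m : ℝ)) ^ 2)⁻¹ ≤ (1 + (R : ℝ))⁻¹ := by
  rcases le_total R N with hRN | hNR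
  · have hshift : ∑ m ∈ Ioc R N, ((1 + (m : ℝ)) ^ 2)⁻¹
        = ∑ i ∈ Ioc (R + 1) (N + 1), ((i : ℝ) ^ 2)⁻¹ := by
      rw [← map_add_right_Ioc, sum_map]
      simp [add_comm]
    rw [hshift]
    refine (sum_Ioc_inv_sq_le_sub R.succ_ne_zero (by omega)).trans ?_
    have : (0 : ℝ) ≤ ((N + 1 : ℕ) : ℝ)⁻¹ := by positivity
    simpa [add_comm] using this
  · rw [Ioc_eq_empty (by omega), sum_empty]
    positivity

noncomputable def clippedDecaySq (a : ℝ) (R m : ℕ) : ℝ :=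
  polyDecay a m * min (polyDecay a m) (2 ^ a * polyDecay a R)

lemma clippedDecaySq_nonneg (a : ℝ) (R m : ℕ) : 0 ≤ clippedDecaySq a R m :=
  mul_nonneg (polyDecay_pos m.cast_nonneg).le <|
    le_min (polyDecay_pos m.cast_nonneg).le <|
      mul_nonneg (by positivity) (polyDecay_pos R.cast_nonneg).le

lemma polyDecay_mul_polyDecay_le_clippedDecaySq {a : ℝ} (ha : 0 ≤ a) {p q R : ℕ} (hR : R ≤ p + q) :
    polyDecay a p * polyDecay a q ≤ clippedDecaySq a R p + clippedDecaySq a R q := by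
  wlog hpq : p ≤ q generalizing p q
  · simpa [mul_comm, add_comm] using this (p := q) (q := p) (by omega) (by omega)
  have hnear : polyDecay a q ≤ min (polyDecay a p) (2 ^ a * polyDecay a R) :=
    le_min (polyDecay_le_polyDecay ha p.cast_nonneg (by exact_mod_cast hpq))
      (polyDecay_le_two_rpow_mul ha R.cast_nonneg (by exact_mod_cast (by omega : R ≤ 2 * q)))
  calc polyDecay a p * polyDecay a q ≤ clippedDecaySq a R p :=
        mul_le_mul_of_nonneg_left hnear (polyDecay_pos p.cast_nonneg).le
    _ ≤ clippedDecaySq a R p + clippedDecaySq a R q :=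
        le_add_of_nonneg_right (clippedDecaySq_nonneg a R q)

lemma rpow_mul_clippedDecaySq_le_of_le {n a : ℝ} (han : a ≤ n - 1) {R m : ℕ} (hmR : m ≤ R) :
    (1 + (m : ℝ)) ^ (n - 1) * clippedDecaySq a R m ≤ 2 ^ a * (1 + (R : ℝ)) ^ (n - 1 - 2 * a) := by
  have hm0 : (0 : ℝ) < 1 + m := by positivity
  have hmR' : (m : ℝ) ≤ R := by exact_mod_cast hmR
  calc (1 + (m : ℝ)) ^ (n - 1) * clippedDecaySq a R m
      ≤ (1 + (m : ℝ)) ^ (n - 1) * (polyDecay a m * (2 ^ a * polyDecay a R)) :=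
        mul_le_mul_of_nonneg_left (mul_le_mul_of_nonneg_left (min_le_right _ _)
          (polyDecay_pos m.cast_nonneg).le) (Real.rpow_nonneg hm0.le _)
    _ = 2 ^ a * polyDecay a R * (1 + (m : ℝ)) ^ (n - 1 - a) := by
        rw [← mul_assoc, rpow_mul_polyDecay m.cast_nonneg, polyDecay]
        ring_nf
    _ ≤ 2 ^ a * polyDecay a R * (1 + (R : ℝ)) ^ (n - 1 - a) :=
        mul_le_mul_of_nonneg_left (Real.rpow_le_rpow hm0.le (by linarith) (by linarith))
          (mul_nonneg (by positivity) (polyDecay_pos R.cast_nonneg).le)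
    _ = 2 ^ a * (1 + (R : ℝ)) ^ (n - 1 - 2 * a) := by
        rw [polyDecay, mul_assoc, ← Real.rpow_add (by positivity)]
        congr 2
        ring

lemma rpow_mul_clippedDecaySq_le_of_ge {n a : ℝ} (hna : n + 1 ≤ 2 * a) {R m : ℕ} (hRm : R ≤ m) :
    (1 + (m : ℝ)) ^ (n - 1) * clippedDecaySq a R m
      ≤ (1 + (R : ℝ)) ^ (n + 1 - 2 * a) * ((1 + (m : ℝ)) ^ 2)⁻¹ := by
  have hm0 : (0 : ℝ) < 1 + m := by positivity
  have hRm' : (R : ℝ) ≤ m := by exact_mod_cast hRm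
  calc (1 + (m : ℝ)) ^ (n - 1) * clippedDecaySq a R m
      ≤ (1 + (m : ℝ)) ^ (n - 1) * (polyDecay a m * polyDecay a m) :=
        mul_le_mul_of_nonneg_left (mul_le_mul_of_nonneg_left (min_le_left _ _)
          (polyDecay_pos m.cast_nonneg).le) (Real.rpow_nonneg hm0.le _)
    _ = (1 + (m : ℝ)) ^ (n + 1 - 2 * a) * ((1 + (m : ℝ)) ^ 2)⁻¹ := by
        rw [polyDecay_mul_polyDecay m.cast_nonneg, rpow_mul_polyDecay m.cast_nonneg, polyDecay,
          ← Real.rpow_natCast, ← Real.rpow_neg hm0.le, ← Real.rpow_add hm0]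
        congr 1
        push_cast
        ring
    _ ≤ (1 + (R : ℝ)) ^ (n + 1 - 2 * a) * ((1 + (m : ℝ)) ^ 2)⁻¹ :=
        mul_le_mul_of_nonneg_right
          (Real.rpow_le_rpow_of_nonpos (by positivity) (by linarith) (by linarith)) (by positivity)

lemma sum_range_rpow_mul_clippedDecaySq_le {n a : ℝ} (han : a ≤ n - 1) (hna : n + 1 ≤ 2 * a)
    (R N : ℕ) :
    ∑ m ∈ range (N + 1), (1 + (m : ℝ)) ^ (n - 1) * clippedDecaySq a R m
      ≤ (2 ^ a + 1) * polyDecay (2 * a - n) R := by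
  set F : ℕ → ℝ := fun m => (1 + (m : ℝ)) ^ (n - 1) * clippedDecaySq a R m
  have hF : ∀ m, 0 ≤ F m := fun m =>
    mul_nonneg (Real.rpow_nonneg (by positivity) _) (clippedDecaySq_nonneg a R m)
  have hR0 : (0 : ℝ) < 1 + R := by positivity
  have hhead : ∀ m ∈ range (R + 1), F m ≤ 2 ^ a * (1 + (R : ℝ)) ^ (n - 1 - 2 * a) :=
    fun m hm => rpow_mul_clippedDecaySq_le_of_le han (Nat.lt_succ_iff.1 (mem_range.1 hm))
  have htail : ∀ m ∈ Ioc R N,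
      F m ≤ (1 + (R : ℝ)) ^ (n + 1 - 2 * a) * ((1 + (m : ℝ)) ^ 2)⁻¹ :=
    fun m hm => rpow_mul_clippedDecaySq_le_of_ge hna (mem_Ioc.1 hm).1.le
  have hsplit : range (N + 1) ⊆ range (R + 1) ∪ Ioc R N := fun m hm => by
    simp only [mem_union, mem_range, mem_Ioc] at hm ⊢
    omega
  have hdisj : Disjoint (range (R + 1)) (Ioc R N) := disjoint_left.2 fun m h1 h2 => by
    simp only [mem_range, mem_Ioc] at h1 h2
    omega
  calc ∑ m ∈ range (N + 1), F m ≤ ∑ m ∈ range (R + 1) ∪ Ioc R N, F m :=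
        sum_le_sum_of_subset_of_nonneg hsplit fun m _ _ => hF m
    _ = ∑ m ∈ range (R + 1), F m + ∑ m ∈ Ioc R N, F m := sum_union hdisj
    _ ≤ (R + 1) * (2 ^ a * (1 + (R : ℝ)) ^ (n - 1 - 2 * a))
          + (1 + (R : ℝ)) ^ (n + 1 - 2 * a) * (1 + (R : ℝ))⁻¹ := by
        gcongr
        · simpa using sum_le_card_nsmul _ _ _ hhead
        · refine (sum_le_sum htail).trans ?_
          rw [← mul_sum]
          gcongr
          exact sum_Ioc_inv_one_add_sq_le R N
    _ = (2 ^ a + 1) * polyDecay (2 * a - n) R := by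
        have hhead_eq :
            ((R : ℝ) + 1) * (1 + (R : ℝ)) ^ (n - 1 - 2 * a) = polyDecay (2 * a - n) R := by
          rw [polyDecay, add_comm (R : ℝ) 1]
          conv_lhs => arg 1; rw [← Real.rpow_one (1 + (R : ℝ))]
          rw [← Real.rpow_add hR0]
          congr 1
          ring
        have htail_eq :
            (1 + (R : ℝ)) ^ (n + 1 - 2 * a) * (1 + (R : ℝ))⁻¹ = polyDecay (2 * a - n) R := by
          rw [polyDecay, ← Real.rpow_neg_one, ← Real.rpow_add hR0]
          congr 1
          ring
        rw [mul_left_comm, hhead_eq, htail_eq]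
        ring

end RadialSums

section LatticeSums

variable {d : ℕ}

lemma card_supSphere_le_rpow [NeZero d] (m : ℕ) :
    (#(supSphere d m) : ℝ) ≤ 2 ^ d * d * (1 + (m : ℝ)) ^ ((d : ℝ) - 1) := by
  have hd : 1 ≤ d := NeZero.one_le
  have hexp : ((d : ℝ) - 1) = ((d - 1 : ℕ) : ℝ) := by rw [Nat.cast_sub hd, Nat.cast_one]
  calc (#(supSphere d m) : ℝ) ≤ 2 * d * (2 * m + 1) ^ (d - 1) := by
        exact_mod_cast card_supSphere_le m
    _ ≤ 2 * d * (2 * (1 + m)) ^ (d - 1) := by gcongr; linarith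
    _ = 2 ^ d * d * (1 + (m : ℝ)) ^ ((d : ℝ) - 1) := by
        rw [hexp, Real.rpow_natCast, mul_pow, ← mul_assoc, mul_right_comm 2 (d : ℝ),
          ← pow_succ', Nat.sub_add_cancel hd]

lemma sum_comp_supNorm_le [NeZero d] {f : ℕ → ℝ} (hf : ∀ m, 0 ≤ f m)
    {s : Finset (Fin d → ℤ)} {N : ℕ} (hs : ∀ y ∈ s, supNorm y ≤ N) :
    ∑ y ∈ s, f (supNorm y)
      ≤ 2 ^ d * d * ∑ m ∈ range (N + 1), (1 + (m : ℝ)) ^ ((d : ℝ) - 1) * f m := by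
  have hmaps : ∀ y ∈ s, supNorm y ∈ range (N + 1) := fun y hy =>
    mem_range.2 (Nat.lt_succ_of_le (hs y hy))
  rw [← sum_fiberwise_of_maps_to' hmaps, mul_sum]
  refine sum_le_sum fun m _ => ?_
  have hfiber : {y ∈ s | supNorm y = m} ⊆ supSphere d m := fun y hy => by
    obtain ⟨-, hym⟩ := mem_filter.1 hy
    exact mem_filter.2 ⟨mem_supBall.2 hym.le, hym⟩
  calc ∑ _y ∈ s with supNorm _y = m, f m = #{y ∈ s | supNorm y = m} * f m := by
        rw [sum_const, nsmul_eq_mul]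
    _ ≤ #(supSphere d m) * f m := by gcongr; exact hf m
    _ ≤ 2 ^ d * d * (1 + (m : ℝ)) ^ ((d : ℝ) - 1) * f m := by
        gcongr
        · exact hf m
        · exact card_supSphere_le_rpow m
    _ = _ := by ring

lemma sum_polyDecay_mul_polyDecay_sub_le {a : ℝ} (had : a ≤ d - 1) (hda : d + 1 ≤ 2 * a)
    (x : Fin d → ℤ) (s : Finset (Fin d → ℤ)) :
    ∑ y ∈ s, polyDecay a (supNorm y) * polyDecay a (supNorm (x - y))
      ≤ 2 * (2 ^ d * d * (2 ^ a + 1)) * polyDecay (2 * a - d) (supNorm x) := by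
  have : NeZero d := ⟨by rintro rfl; norm_num at had hda; linarith⟩
  set R := supNorm x
  set B := 2 ^ d * d * (2 ^ a + 1) * polyDecay (2 * a - d) R
  have hclipped : ∀ t : Finset (Fin d → ℤ), ∑ z ∈ t, clippedDecaySq a R (supNorm z) ≤ B :=
    fun t => (sum_comp_supNorm_le (clippedDecaySq_nonneg a R) fun _ hz => le_sup hz).trans <| by
      rw [show B = 2 ^ d * d * ((2 ^ a + 1) * polyDecay (2 * a - d) R) by ring]
      gcongr
      exact sum_range_rpow_mul_clippedDecaySq_le had hda R _
  have hpoint : ∀ y, polyDecay a (supNorm y) * polyDecay a (supNorm (x - y))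
      ≤ clippedDecaySq a R (supNorm y) + clippedDecaySq a R (supNorm (x - y)) := fun y =>
    polyDecay_mul_polyDecay_le_clippedDecaySq (by linarith)
      (by simpa using supNorm_add_le y (x - y))
  calc ∑ y ∈ s, polyDecay a (supNorm y) * polyDecay a (supNorm (x - y))
      ≤ ∑ y ∈ s, clippedDecaySq a R (supNorm y)
          + ∑ y ∈ s, clippedDecaySq a R (supNorm (x - y)) := by
        rw [← sum_add_distrib]; exact sum_le_sum fun y _ => hpoint y
    _ = ∑ y ∈ s, clippedDecaySq a R (supNorm y)
          + ∑ z ∈ s.image (x - ·), clippedDecaySq a R (supNorm z) := by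
        rw [sum_image fun _ _ _ _ h => sub_right_injective h]
    _ ≤ 2 * B := by linarith [hclipped s, hclipped (s.image (x - ·))]
    _ = _ := by ring

end LatticeSums

section Convolution

variable {d : ℕ} {g : (Fin d → ℤ) → ℝ}

lemma le_mul_polyDecay_supNorm {a C : ℝ} (ha : 0 ≤ a) (hC : 0 ≤ C)
    (hg : ∀ x, g x ≤ C / (1 + znorm x ^ a)) (x : Fin d → ℤ) :
    g x ≤ C * 2 ^ a * polyDecay a (supNorm x) := by
  calc g x ≤ C * (1 + znorm x ^ a)⁻¹ := (hg x).trans_eq (div_eq_mul_inv _ _)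
    _ ≤ C * (2 ^ a * polyDecay a (supNorm x)) := by
        gcongr
        exact inv_one_add_rpow_le_polyDecay (Nat.cast_nonneg _) (supNorm_le_znorm x) ha
    _ = C * 2 ^ a * polyDecay a (supNorm x) := by ring

lemma exists_sum_mul_sub_le {a C : ℝ} (had : a ≤ d - 1) (hda : d + 1 ≤ 2 * a) (hC : 0 < C)
    (hg0 : ∀ x, 0 ≤ g x) (hg : ∀ x, g x ≤ C / (1 + znorm x ^ a)) :
    ∃ C' : ℝ, 0 < C' ∧ ∀ (x : Fin d → ℤ) (s : Finset (Fin d → ℤ)),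
      ∑ y ∈ s, g y * g (x - y) ≤ C' / (1 + znorm x ^ (2 * a - d)) := by
  have ha : 0 ≤ a := by linarith [d.cast_nonneg (α := ℝ)]
  have hd : (1 : ℝ) ≤ d := by linarith
  set K := C * 2 ^ a
  set B : ℝ := 2 * (2 ^ d * d * (2 ^ a + 1))
  refine ⟨K ^ 2 * B * (2 * √d ^ (2 * a - d)), by positivity, fun x s => ?_⟩
  have hgK : ∀ z, g z ≤ K * polyDecay a (supNorm z) := le_mul_polyDecay_supNorm ha hC.le hg
  have hK : 0 ≤ K := by positivity
  calc ∑ y ∈ s, g y * g (x - y)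
      ≤ ∑ y ∈ s, K ^ 2 * (polyDecay a (supNorm y) * polyDecay a (supNorm (x - y))) :=
        sum_le_sum fun y _ =>
          calc g y * g (x - y)
              ≤ (K * polyDecay a (supNorm y)) * (K * polyDecay a (supNorm (x - y))) :=
                mul_le_mul (hgK y) (hgK (x - y)) (hg0 _)
                  (mul_nonneg hK (polyDecay_pos (Nat.cast_nonneg _)).le)
            _ = K ^ 2 * (polyDecay a (supNorm y) * polyDecay a (supNorm (x - y))) := by ring
    _ = K ^ 2 * ∑ y ∈ s, polyDecay a (supNorm y) * polyDecay a (supNorm (x - y)) :=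
        (mul_sum _ _ _).symm
    _ ≤ K ^ 2 * (B * polyDecay (2 * a - d) (supNorm x)) := by
        gcongr
        exact sum_polyDecay_mul_polyDecay_sub_le had hda x s
    _ ≤ K ^ 2 * (B * (2 * √d ^ (2 * a - d) * (1 + znorm x ^ (2 * a - d))⁻¹)) := by
        gcongr
        exact polyDecay_le_inv_one_add_rpow (Real.one_le_sqrt.2 hd) (Nat.cast_nonneg _)
          (Real.sqrt_nonneg _) (znorm_le_sqrt_mul_supNorm x) (by linarith : (0 : ℝ) ≤ 2 * a - d)
    _ = K ^ 2 * B * (2 * √d ^ (2 * a - d)) / (1 + znorm x ^ (2 * a - d)) := by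
        rw [div_eq_mul_inv]; ring

lemma exists_le_sum_supBall_mul_sub [NeZero d] {a c : ℝ} (hda : d ≤ 2 * a) (hc : 0 < c)
    (hg : ∀ x, c / (1 + znorm x ^ a) ≤ g x) :
    ∃ c' : ℝ, 0 < c' ∧ ∀ x : Fin d → ℤ,
      c' / (1 + znorm x ^ (2 * a - d)) ≤ ∑ y ∈ supBall d (supNorm x), g y * g (x - y) := by
  have ha : 0 ≤ a := by linarith [d.cast_nonneg (α := ℝ)]
  set l := 2 * √d
  have hl : 1 ≤ l := by
    have : (1 : ℝ) ≤ √d := Real.one_le_sqrt.2 (by exact_mod_cast NeZero.one_le)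
    linarith
  set L := c / (2 * l ^ a)
  have hL : 0 < L := by positivity
  refine ⟨L ^ 2 / 2 ^ (2 * a - d), by positivity, fun x => ?_⟩
  set R := supNorm x
  have hφ : 0 < polyDecay a R := polyDecay_pos R.cast_nonneg
  have hglow : ∀ z, znorm z ≤ l * R → L * polyDecay a R ≤ g z := fun z hz =>
    (div_mul_polyDecay_le_div hc.le hl R.cast_nonneg (Real.sqrt_nonneg _) hz ha).trans (hg z)
  have hterm : ∀ y ∈ supBall d R, (L * polyDecay a R) ^ 2 ≤ g y * g (x - y) := fun y hy => by
    have hyR : supNorm y ≤ R := mem_supBall.1 hy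
    have hy : (supNorm y : ℝ) ≤ R := by exact_mod_cast hyR
    have hxy : (supNorm (x - y) : ℝ) ≤ 2 * R := by
      exact_mod_cast (supNorm_sub_le x y).trans (by omega)
    have hgy := hglow y <| (znorm_le_sqrt_mul_supNorm y).trans <| by
      have := Real.sqrt_nonneg d
      nlinarith
    have hgxy := hglow (x - y) <| (znorm_le_sqrt_mul_supNorm (x - y)).trans <| by
      have := Real.sqrt_nonneg d
      nlinarith
    rw [sq]
    exact mul_le_mul hgy hgxy (mul_nonneg hL.le hφ.le) ((mul_nonneg hL.le hφ.le).trans hgy)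
  have hcard : (1 + (R : ℝ)) ^ (d : ℝ) ≤ #(supBall d R) := by
    rw [Real.rpow_natCast, card_supBall]
    push_cast
    exact pow_le_pow_left₀ (by positivity) (by linarith) d
  calc L ^ 2 / 2 ^ (2 * a - d) / (1 + znorm x ^ (2 * a - d))
      = L ^ 2 / 2 ^ (2 * a - d) * (1 + znorm x ^ (2 * a - d))⁻¹ := div_eq_mul_inv _ _
    _ ≤ L ^ 2 / 2 ^ (2 * a - d) * (2 ^ (2 * a - d) * polyDecay (2 * a - d) R) := by
        gcongr
        exact inv_one_add_rpow_le_polyDecay R.cast_nonneg (supNorm_le_znorm x) (by linarith)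
    _ = (1 + (R : ℝ)) ^ (d : ℝ) * (L * polyDecay a R) ^ 2 := by
        have h2q : (0 : ℝ) < 2 ^ (2 * a - d) := by positivity
        rw [← rpow_mul_polyDecay_sq R.cast_nonneg]
        field_simp
    _ ≤ #(supBall d R) * (L * polyDecay a R) ^ 2 := by gcongr
    _ ≤ ∑ y ∈ supBall d R, g y * g (x - y) := by
        rw [← nsmul_eq_mul]
        exact card_nsmul_le_sum _ _ _ hterm

end Convolution

/-- If `g` decays like `(1+‖x‖^{d-2})^{-1}` (the Green's function profile),
then `G = g * g` decays like `(1+‖x‖^{d-4})^{-1}`, with a matching lower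
bound when `g` is also bounded below by the same profile. -/
theorem stmt15 (d : ℕ) (hd : 5 ≤ d) (C : ℝ) (hC : 0 < C)
    (g : (Fin d → ℤ) → ℝ) (hg0 : ∀ x, 0 ≤ g x)
    (hgU : ∀ x : Fin d → ℤ, g x ≤ C / (1 + znorm x ^ ((d : ℝ) - 2))) :
    (∃ C' : ℝ, 0 < C' ∧ ∀ x : Fin d → ℤ,
        (∑' y : Fin d → ℤ, g y * g (x - y)) ≤ C' / (1 + znorm x ^ ((d : ℝ) - 4))) ∧
    (∀ c : ℝ, 0 < c → (∀ x : Fin d → ℤ, c / (1 + znorm x ^ ((d : ℝ) - 2)) ≤ g x) →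
      ∃ c' : ℝ, 0 < c' ∧ ∀ x : Fin d → ℤ,
        c' / (1 + znorm x ^ ((d : ℝ) - 4)) ≤ ∑' y : Fin d → ℤ, g y * g (x - y)) := by
  have hd' : (5 : ℝ) ≤ d := by exact_mod_cast hd
  have hexp : (d : ℝ) - 4 = 2 * ((d : ℝ) - 2) - d := by ring
  have hprod : ∀ x y, 0 ≤ g y * g (x - y) := fun x y => mul_nonneg (hg0 y) (hg0 (x - y))
  obtain ⟨C', hC', hupper⟩ := exists_sum_mul_sub_le (by linarith) (by linarith) hC hg0 hgU
  refine ⟨⟨C', hC', fun x => ?_⟩, fun c hc hgL => ?_⟩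
  · rw [hexp]
    exact Real.tsum_le_of_sum_le (hprod x) (hupper x)
  · have : NeZero d := ⟨by omega⟩
    obtain ⟨c', hc', hlower⟩ := exists_le_sum_supBall_mul_sub (by linarith) hc hgL
    refine ⟨c', hc', fun x => ?_⟩
    rw [hexp]
    exact (hlower x).trans <| (summable_of_sum_le (hprod x) (hupper x)).sum_le_tsum _
      fun y _ => hprod x y
end

section
/- Let T be a finite tree with n+m vertices partitioned into n ≥ 1 'intersection-or-external' vertices and m 'branching' vertices, equipped with an edge coloring by {1,…,c} such that each color class forms a subtree, monochromatic subtrees of different colors meet in at most one vertex, and every color-change vertex is an intersection vertex. If every branching vertex has degree ≥ 3 in its own color class except at most one degree-2 branching vertex per color class, then m ≤ n − 1 + c, i.e. the number of branching vertices is bounded by the number of other internal vertices plus the number of colors. -/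
/-- Counting branching vertices in an edge-colored tree (Section 4.2): if a
finite tree on `n + m` vertices is partitioned into `n` intersection-or-external
vertices and `m` branching vertices, its edges are colored with `c` colors so
that each color class is a connected subgraph, two distinct color classes meet
in at most one vertex which is then an intersection vertex, and every
branching vertex has degree at least `3` in its own color class except at most
one degree-`2` branching vertex per color class, then `m ≤ n - 1 + c`. -/
theorem stmt18 {V : Type*} [Fintype V] [DecidableEq V] (G : SimpleGraph V)
    (hG : G.IsTree) (n m c : ℕ) (hn : 1 ≤ n) (hc : 1 ≤ c)
    (B I : Finset V) (hBcard : B.card = m) (hIcard : I.card = n)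
    (hdisj : Disjoint B I) (hunion : B ∪ I = Finset.univ)
    (hcardV : Fintype.card V = n + m)
    (A : Fin c → G.Subgraph)
    (hconn : ∀ i, (A i).Connected)
    (hpart : ∀ e ∈ G.edgeSet, ∃! i, e ∈ (A i).edgeSet)
    (hmeet : ∀ i j, i ≠ j → ((A i).verts ∩ (A j).verts).Subsingleton)
    (hchange : ∀ i j, i ≠ j → ∀ v ∈ (A i).verts ∩ (A j).verts, v ∈ I)
    (hdeg : ∀ i : Fin c, ∃ u₀ : V, ∀ v ∈ B, v ∈ (A i).verts →
      (v ≠ u₀ → 3 ≤ ((A i).neighborSet v).ncard) ∧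
      (v = u₀ → 2 ≤ ((A i).neighborSet v).ncard)) :
    m ≤ n - 1 + c := by
  classical
  rcases Nat.eq_zero_or_pos m with hm | hm
  · omega
  have hV2 : 2 ≤ Fintype.card V := by omega
  -- every vertex has a neighbor
  have hadj : ∀ v : V, ∃ w, G.Adj v w := by
    intro v
    obtain ⟨w, hw⟩ := Fintype.exists_ne_of_one_lt_card (by omega) v
    obtain ⟨p⟩ := hG.isConnected.preconnected v w
    cases p with
    | nil => exact absurd rfl hw
    | cons h _ => exact ⟨_, h⟩
  have hdegpos : ∀ v : V, 1 ≤ G.degree v := fun v =>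
    G.degree_pos_iff_exists_adj v |>.mpr (hadj v)
  -- each branching vertex lives in a single color class, where it has full degree
  have key : ∀ v : V, ∃ i : Fin c, v ∈ B →
      v ∈ (A i).verts ∧ G.neighborSet v = (A i).neighborSet v := by
    intro v
    by_cases hv : v ∈ B
    · obtain ⟨w, hw⟩ := hadj v
      obtain ⟨i, hi, -⟩ := hpart s(v, w) hw
      refine ⟨i, fun _ => ⟨(A i).edge_vert hi, ?_⟩⟩
      ext u
      simp only [SimpleGraph.mem_neighborSet, SimpleGraph.Subgraph.mem_neighborSet]
      constructor
      · intro hu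
        obtain ⟨j, hj, -⟩ := hpart s(v, u) hu
        by_cases hij : j = i
        · exact SimpleGraph.Subgraph.mem_edgeSet.mp (hij ▸ hj)
        · exact absurd (hchange j i hij v ⟨(A j).edge_vert hj, (A i).edge_vert hi⟩)
            (Finset.disjoint_left.mp hdisj hv)
      · intro hu
        exact (A i).adj_sub hu
    · exact ⟨⟨0, hc⟩, fun h => absurd h hv⟩
  choose col hcol using key
  choose u₀ hu₀ using hdeg
  have hncard : ∀ v : V, (G.neighborSet v).ncard = G.degree v := by
    intro v
    rw [SimpleGraph.degree, SimpleGraph.neighborFinset_def, ← Set.ncard_eq_toFinset_card']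
  have hdegeq : ∀ v ∈ B, ((A (col v)).neighborSet v).ncard = G.degree v := by
    intro v hv
    rw [← (hcol v hv).2, hncard]
  -- all branching vertices have degree ≥ 2
  have hdeg2 : ∀ v ∈ B, 2 ≤ G.degree v := by
    intro v hv
    have h := hu₀ (col v) v hv (hcol v hv).1
    rw [← hdegeq v hv]
    by_cases hvu : v = u₀ (col v)
    · exact h.2 hvu
    · exact le_trans (by norm_num) (h.1 hvu)
  -- exceptional branching vertices (degree < 3)
  set ex : Finset V := B.filter (fun v => G.degree v < 3) with hex
  have hexB : ex ⊆ B := Finset.filter_subset _ _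
  have hexu : ∀ v ∈ ex, v = u₀ (col v) := by
    intro v hv
    rw [hex, Finset.mem_filter] at hv
    by_contra hvu
    have := (hu₀ (col v) v hv.1 (hcol v hv.1).1).1 hvu
    rw [hdegeq v hv.1] at this
    omega
  have hexc : ex.card ≤ c := by
    have : ex.card ≤ (Finset.univ : Finset (Fin c)).card := by
      apply Finset.card_le_card_of_injOn col (fun v _ => Finset.mem_univ _)
      intro v hv w hw hvw
      rw [hexu v hv, hexu w hw, hvw]
    simpa using this
  -- degree sums
  have hS : ∑ v, G.degree v = 2 * G.edgeFinset.card :=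
    SimpleGraph.sum_degrees_eq_twice_card_edges G
  have hE : G.edgeFinset.card + 1 = n + m := by
    rw [hG.card_edgeFinset, hcardV]
  have hsplit : ∑ v ∈ B, G.degree v + ∑ v ∈ I, G.degree v = ∑ v, G.degree v := by
    rw [← Finset.sum_union hdisj, hunion]
  have hI : n ≤ ∑ v ∈ I, G.degree v := by
    calc n = I.card • 1 := by rw [hIcard, smul_eq_mul, mul_one]
    _ ≤ ∑ v ∈ I, G.degree v := Finset.card_nsmul_le_sum I _ 1 (fun v _ => hdegpos v)
  have hBsplit : ∑ v ∈ B \ ex, G.degree v + ∑ v ∈ ex, G.degree v = ∑ v ∈ B, G.degree v :=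
    Finset.sum_sdiff hexB
  have hcards : (B \ ex).card + ex.card = m := by
    rw [Finset.card_sdiff_add_card_eq_card hexB, hBcard]
  have he2 : ex.card * 2 ≤ ∑ v ∈ ex, G.degree v := by
    calc ex.card * 2 = ex.card • 2 := by rw [smul_eq_mul]
    _ ≤ ∑ v ∈ ex, G.degree v :=
      Finset.card_nsmul_le_sum ex _ 2 (fun v hv => hdeg2 v (hexB hv))
  have he3 : (B \ ex).card * 3 ≤ ∑ v ∈ B \ ex, G.degree v := by
    calc (B \ ex).card * 3 = (B \ ex).card • 3 := by rw [smul_eq_mul]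
    _ ≤ ∑ v ∈ B \ ex, G.degree v := by
      apply Finset.card_nsmul_le_sum
      intro v hv
      obtain ⟨hvB, hvex⟩ := Finset.mem_sdiff.mp hv
      have : ¬ G.degree v < 3 := fun h => hvex (Finset.mem_filter.mpr ⟨hvB, h⟩)
      omega
  omega
end
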